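/- arXiv:1102.0338 — 9 statements merged into one kernel-verified Lean document; each statement's English description precedes it below -/
import Mathlib

section
/- Let 0 < α < 1 and let f_α be analytic on the unit disk 𝔻 with f_α(0) = 0, f_α'(0) = 1, f_α' nonvanishing, and satisfying 1 + z f_α''(z)/f_α'(z) = ((1+z²)/(1−z²))^α (principal branch) for all z ∈ 𝔻. Then the Schwarzian derivative of f_α at the origin equals S_{f_α}(0) = 2α; consequently sup_{z∈𝔻}(1−|z|²)²|S_{f_α}(z)| ≥ 2α, so the bound ‖S_f‖ ≤ 2α for strongly convex functions of order α is sharp. -/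
/-!
Write `p = f''/f'` and `φ(u) = ((1 + u)/(1 - u))^α`. The differential equation says
`z p(z) = φ(z²) - 1`; differentiating it twice at `0` gives `p(0) = 0` and `p'(0) = φ'(0) = 2α`,
and `S_f = p' - p²/2` yields `S_f(0) = 2α`.

Since `sSup` of a set of reals that is not bounded above is `0`, the inequality also needs
`(1 - |z|²)² |S_f(z)|` to be bounded on the disk. On `|z| ≤ 1/2` this is compactness. Near the
boundary the equation and its derivative express `p` and `p'` through `φ(z²)` and `φ'(z²)`, and
`|φ(u)| ≤ 2/(1 - |u|)`, `|φ'(u)| ≤ 2/(1 - |u|)²` bound the weighted Schwarzian by a constant.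
-/

open Metric Complex Filter Topology

section Schwarzian

variable {𝕜 : Type*} [NontriviallyNormedField 𝕜]

noncomputable def preSchwarzian (f : 𝕜 → 𝕜) (z : 𝕜) : 𝕜 :=
  deriv (deriv f) z / deriv f z

noncomputable def schwarzian (f : 𝕜 → 𝕜) (z : 𝕜) : 𝕜 :=
  deriv (deriv (deriv f)) z / deriv f z - 3 / 2 * preSchwarzian f z ^ 2

theorem schwarzian_eq_deriv_preSchwarzian_sub [CharZero 𝕜] {f : 𝕜 → 𝕜} {z : 𝕜}
    (h₁ : DifferentiableAt 𝕜 (deriv f) z) (h₂ : DifferentiableAt 𝕜 (deriv (deriv f)) z)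
    (hz : deriv f z ≠ 0) :
    schwarzian f z = deriv (preSchwarzian f) z - preSchwarzian f z ^ 2 / 2 := by
  have hp : deriv (preSchwarzian f) z
      = deriv (deriv (deriv f)) z / deriv f z - preSchwarzian f z ^ 2 := by
    rw [show preSchwarzian f = deriv (deriv f) / deriv f from rfl, deriv_div h₂ h₁ hz]
    simp only [Pi.div_apply]
    field_simp
  rw [schwarzian, hp]
  ring

end Schwarzian

theorem AnalyticOnNhd.preSchwarzian {f : ℂ → ℂ} {U : Set ℂ} (hU : IsOpen U)
    (hf : DifferentiableOn ℂ f U) (hf' : ∀ z ∈ U, deriv f z ≠ 0) :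
    AnalyticOnNhd ℂ (preSchwarzian f) U :=
  have h₁ := (hf.analyticOnNhd hU).deriv
  h₁.deriv.div h₁ hf'

theorem add_mul_deriv_eq_of_mul_eq_comp_sq {p φ : ℂ → ℂ} {c z : ℂ}
    (hp : DifferentiableAt ℂ p z) (hφ : DifferentiableAt ℂ φ (z ^ 2))
    (h : ∀ᶠ w in 𝓝 z, w * p w = φ (w ^ 2) - c) :
    p z + z * deriv p z = 2 * z * deriv φ (z ^ 2) := by
  have hl : HasDerivAt (fun w => w * p w) (1 * p z + z * deriv p z) z :=
    (hasDerivAt_id z).mul hp.hasDerivAt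
  have hr : HasDerivAt (fun w => φ (w ^ 2) - c) (deriv φ (z ^ 2) * (2 * z)) z := by
    simpa using (hφ.hasDerivAt.comp z (hasDerivAt_pow 2 z)).sub_const c
  have := hl.deriv.symm.trans ((EventuallyEq.deriv_eq h).trans hr.deriv)
  linear_combination this

theorem apply_zero_eq_zero_and_deriv_eq_of_mul_eq_comp_sq {p φ : ℂ → ℂ} {c : ℂ}
    (hp : AnalyticAt ℂ p 0) (hφ : AnalyticAt ℂ φ 0)
    (h : ∀ᶠ z in 𝓝 0, z * p z = φ (z ^ 2) - c) :
    p 0 = 0 ∧ deriv p 0 = deriv φ 0 := by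
  have hφsq : ∀ᶠ z in 𝓝 (0 : ℂ), AnalyticAt ℂ φ (z ^ 2) :=
    ((continuous_pow 2).tendsto' 0 0 (by simp)).eventually hφ.eventually_analyticAt
  have hode : (fun z => p z + z * deriv p z) =ᶠ[𝓝 0] fun z => 2 * z * deriv φ (z ^ 2) := by
    filter_upwards [h.eventually_nhds, hp.eventually_analyticAt, hφsq] with z hz hpz hφz
    exact add_mul_deriv_eq_of_mul_eq_comp_sq hpz.differentiableAt hφz.differentiableAt hz
  have hl : HasDerivAt (fun z => p z + z * deriv p z)
      (deriv p 0 + (1 * deriv p 0 + 0 * deriv (deriv p) 0)) 0 :=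
    hp.differentiableAt.hasDerivAt.add
      ((hasDerivAt_id 0).mul hp.deriv.differentiableAt.hasDerivAt)
  have hr : HasDerivAt (fun z => 2 * z * deriv φ (z ^ 2)) (2 * deriv φ 0) 0 := by
    have hcomp : HasDerivAt (fun z => deriv φ (z ^ 2)) (deriv (deriv φ) 0 * (2 * 0 ^ 1)) 0 :=
      hφ.deriv.differentiableAt.hasDerivAt.comp_of_eq 0 (hasDerivAt_pow 2 0) (by simp)
    have hlin : HasDerivAt (fun z : ℂ => 2 * z) 2 0 := by
      simpa using (hasDerivAt_id (0 : ℂ)).const_mul 2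
    exact (hlin.mul hcomp).congr_deriv (by norm_num)
  refine ⟨by simpa using hode.eq_of_nhds, ?_⟩
  have := hl.deriv.symm.trans (hode.deriv_eq.trans hr.deriv)
  linear_combination this / 2

theorem Real.rpow_le_max_one {x α : ℝ} (hx : 0 ≤ x) (h₀ : 0 ≤ α) (h₁ : α ≤ 1) :
    x ^ α ≤ max 1 x := by
  rcases le_total x 1 with hx1 | hx1
  · exact (Real.rpow_le_one hx hx1 h₀).trans (le_max_left _ _)
  · exact (Real.rpow_le_self_of_one_le hx1 h₁).trans (le_max_right _ _)

namespace Complex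

variable {u : ℂ}

theorem one_sub_norm_le_norm_one_sub (u : ℂ) : 1 - ‖u‖ ≤ ‖1 - u‖ := by
  simpa using norm_sub_norm_le 1 u

theorem one_sub_norm_le_norm_one_add (u : ℂ) : 1 - ‖u‖ ≤ ‖1 + u‖ := by
  simpa using one_sub_norm_le_norm_one_sub (-u)

theorem one_sub_ne_zero_of_norm_lt_one (hu : ‖u‖ < 1) : 1 - u ≠ 0 :=
  norm_pos_iff.1 ((sub_pos.2 hu).trans_le (one_sub_norm_le_norm_one_sub u))

theorem one_add_ne_zero_of_norm_lt_one (hu : ‖u‖ < 1) : 1 + u ≠ 0 :=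
  norm_pos_iff.1 ((sub_pos.2 hu).trans_le (one_sub_norm_le_norm_one_add u))

theorem re_one_add_div_one_sub_pos (hu : ‖u‖ < 1) : 0 < ((1 + u) / (1 - u)).re := by
  have hnum : (1 + u).re * (1 - u).re + (1 + u).im * (1 - u).im = 1 - ‖u‖ ^ 2 := by
    rw [← normSq_eq_norm_sq, normSq_apply]
    simp only [add_re, sub_re, add_im, sub_im, one_re, one_im]
    ring
  rw [div_re, ← add_div, hnum]
  have := normSq_pos.2 (one_sub_ne_zero_of_norm_lt_one hu)
  have : 0 < 1 - ‖u‖ ^ 2 := by nlinarith [norm_nonneg u]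
  positivity

end Complex

/-- `((1 + u)/(1 - u))^α`; the extremal function solves `1 + z f''/f' = cayleyPow α (z²)`. -/
noncomputable def cayleyPow (α : ℝ) (u : ℂ) : ℂ :=
  exp (α * log ((1 + u) / (1 - u)))

section CayleyPow

variable {α : ℝ} {u : ℂ}

@[simp] theorem cayleyPow_zero : cayleyPow α 0 = 1 := by simp [cayleyPow]

theorem hasDerivAt_cayleyPow (hu : ‖u‖ < 1) :
    HasDerivAt (cayleyPow α) (2 * α * cayleyPow α u / ((1 + u) * (1 - u))) u := by
  have hminus := one_sub_ne_zero_of_norm_lt_one hu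
  have hq : HasDerivAt (fun u : ℂ => (1 + u) / (1 - u)) (2 / (1 - u) ^ 2) u := by
    refine (((hasDerivAt_id u).const_add 1).div ((hasDerivAt_id u).const_sub 1)
      hminus).congr_deriv ?_
    simp only [id_eq]
    ring
  have hslit : (1 + u) / (1 - u) ∈ slitPlane :=
    mem_slitPlane_iff.2 (Or.inl (re_one_add_div_one_sub_pos hu))
  refine ((hq.clog hslit).const_mul (α : ℂ)).cexp.congr_deriv ?_
  unfold cayleyPow
  field_simp

theorem deriv_cayleyPow_zero : deriv (cayleyPow α) 0 = 2 * α := by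
  simp [(hasDerivAt_cayleyPow (α := α) (u := 0) (by simp)).deriv]

theorem differentiableOn_cayleyPow : DifferentiableOn ℂ (cayleyPow α) (ball 0 1) :=
  fun _ hu =>
    (hasDerivAt_cayleyPow (mem_ball_zero_iff.1 hu)).differentiableAt.differentiableWithinAt

theorem norm_cayleyPow (hu : ‖u‖ < 1) :
    ‖cayleyPow α u‖ = (‖1 + u‖ / ‖1 - u‖) ^ α := by
  have hpos : 0 < ‖1 + u‖ / ‖1 - u‖ := div_pos
    (norm_pos_iff.2 (one_add_ne_zero_of_norm_lt_one hu))
    (norm_pos_iff.2 (one_sub_ne_zero_of_norm_lt_one hu))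
  rw [cayleyPow, norm_exp, re_ofReal_mul, log_re, norm_div, Real.rpow_def_of_pos hpos, mul_comm]

variable (h₀ : 0 ≤ α) (h₁ : α ≤ 1) (hu : ‖u‖ < 1)
include h₀ h₁ hu

theorem norm_cayleyPow_le :
    ‖cayleyPow α u‖ ≤ 2 / (1 - ‖u‖) := by
  have ht : 0 < 1 - ‖u‖ := sub_pos.2 hu
  rw [norm_cayleyPow hu]
  refine (Real.rpow_le_max_one (by positivity) h₀ h₁).trans (max_le ?_ ?_)
  · rw [le_div_iff₀ ht]; linarith [norm_nonneg u]
  · gcongr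
    · linarith [norm_add_le 1 u, norm_one (α := ℂ)]
    · exact one_sub_norm_le_norm_one_sub u

theorem norm_deriv_cayleyPow_le :
    ‖deriv (cayleyPow α) u‖ ≤ 2 / (1 - ‖u‖) ^ 2 := by
  have ht : 0 < 1 - ‖u‖ := sub_pos.2 hu
  have ha := one_sub_norm_le_norm_one_add u
  have hb := one_sub_norm_le_norm_one_sub u
  have hab : 0 < ‖1 + u‖ * ‖1 - u‖ := mul_pos (ht.trans_le ha) (ht.trans_le hb)
  have hmax : max 1 (‖1 + u‖ / ‖1 - u‖)
      ≤ ‖1 + u‖ * ‖1 - u‖ / (1 - ‖u‖) ^ 2 := by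
    refine max_le ?_ ?_
    · rw [le_div_iff₀ (by positivity), one_mul, sq]
      exact mul_le_mul ha hb ht.le (ht.le.trans ha)
    · rw [div_le_div_iff₀ (ht.trans_le hb) (by positivity), mul_assoc, sq]
      gcongr
  rw [(hasDerivAt_cayleyPow hu).deriv, norm_div, norm_mul, norm_mul, norm_mul, norm_cayleyPow hu,
    norm_real, Real.norm_of_nonneg h₀, Complex.norm_two]
  calc 2 * α * (‖1 + u‖ / ‖1 - u‖) ^ α / (‖1 + u‖ * ‖1 - u‖)
      ≤ 2 * 1 * (‖1 + u‖ * ‖1 - u‖ / (1 - ‖u‖) ^ 2) / (‖1 + u‖ * ‖1 - u‖) := by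
        gcongr
        exact (Real.rpow_le_max_one (by positivity) h₀ h₁).trans hmax
    _ = 2 / (1 - ‖u‖) ^ 2 := by
        rw [mul_one, mul_div_assoc, div_div_cancel_left' hab.ne']
        ring

end CayleyPow

theorem sq_one_sub_norm_sq_mul_norm_deriv_sub_le {p φ : ℂ → ℂ} {z : ℂ}
    (hz : 1 / 2 ≤ ‖z‖) (hz₁ : ‖z‖ < 1)
    (hφ : ‖φ (z ^ 2)‖ ≤ 2 / (1 - ‖z‖ ^ 2))
    (hφ' : ‖deriv φ (z ^ 2)‖ ≤ 2 / (1 - ‖z‖ ^ 2) ^ 2)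
    (h₀ : z * p z = φ (z ^ 2) - 1) (h₁ : p z + z * deriv p z = 2 * z * deriv φ (z ^ 2)) :
    (1 - ‖z‖ ^ 2) ^ 2 * ‖deriv p z - p z ^ 2 / 2‖ ≤ 38 := by
  set t := 1 - ‖z‖ ^ 2
  have ht : 0 < t := by nlinarith [norm_nonneg z]
  have ht₁ : t ≤ 1 := by nlinarith [norm_nonneg z]
  rw [le_div_iff₀ ht, mul_comm] at hφ
  rw [le_div_iff₀ (by positivity), mul_comm] at hφ'
  have hP : t * ‖p z‖ ≤ 6 := by
    have : ‖z‖ * ‖p z‖ ≤ ‖φ (z ^ 2)‖ + 1 := by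
      rw [← norm_mul, h₀]; exact (norm_sub_le _ _).trans_eq (by rw [norm_one])
    nlinarith [norm_nonneg (p z)]
  have hQ : t ^ 2 * ‖deriv p z‖ ≤ 20 := by
    have : ‖z‖ * ‖deriv p z‖ ≤ 2 * ‖z‖ * ‖deriv φ (z ^ 2)‖ + ‖p z‖ := by
      rw [← norm_mul, eq_sub_of_add_eq' h₁]
      refine (norm_sub_le _ _).trans_eq ?_
      rw [norm_mul, norm_mul, Complex.norm_two]
    nlinarith [norm_nonneg (p z), norm_nonneg (deriv p z), norm_nonneg (deriv φ (z ^ 2))]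
  calc t ^ 2 * ‖deriv p z - p z ^ 2 / 2‖
      ≤ t ^ 2 * ‖deriv p z‖ + (t * ‖p z‖) ^ 2 / 2 := by
        have := norm_sub_le (deriv p z) (p z ^ 2 / 2)
        rw [norm_div, norm_pow, Complex.norm_two] at this
        nlinarith
    _ ≤ 38 := by nlinarith [mul_nonneg ht.le (norm_nonneg (p z))]

theorem bddAbove_image_ball_of_le {E : Type*} [PseudoMetricSpace E] [ProperSpace E]
    {F : E → ℝ} {x : E} {r s C : ℝ} (hF : ContinuousOn F (ball x r)) (hs : s < r)
    (hC : ∀ z ∈ ball x r, s < dist z x → F z ≤ C) : BddAbove (F '' ball x r) := by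
  have hK := (isCompact_closedBall x s).bddAbove_image (hF.mono (closedBall_subset_ball hs))
  refine (hK.union (bddAbove_Iic (a := C))).mono ?_
  rintro _ ⟨z, hz, rfl⟩
  by_cases hzs : dist z x ≤ s
  · exact Or.inl ⟨z, hzs, rfl⟩
  · exact Or.inr (hC z hz (not_le.1 hzs))

section ExtremalFunction

variable {α : ℝ} {f : ℂ → ℂ} (hf : DifferentiableOn ℂ f (ball 0 1))
  (hf' : ∀ z ∈ ball (0 : ℂ) 1, deriv f z ≠ 0)
  (hode : ∀ z ∈ ball (0 : ℂ) 1, z * preSchwarzian f z = cayleyPow α (z ^ 2) - 1)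
include hf hf'

theorem schwarzian_eqOn_ball :
    Set.EqOn (schwarzian f) (fun z => deriv (preSchwarzian f) z - preSchwarzian f z ^ 2 / 2)
      (ball 0 1) := fun z hz =>
  have h₁ := (hf.analyticOnNhd isOpen_ball).deriv
  schwarzian_eq_deriv_preSchwarzian_sub (h₁ z hz).differentiableAt
    (h₁.deriv z hz).differentiableAt (hf' z hz)

include hode

theorem schwarzian_zero_eq_of_mul_preSchwarzian_eq : schwarzian f 0 = 2 * α := by
  have h0 : ball (0 : ℂ) 1 ∈ 𝓝 0 := ball_mem_nhds 0 one_pos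
  obtain ⟨hp₀, hp₀'⟩ := apply_zero_eq_zero_and_deriv_eq_of_mul_eq_comp_sq
    (AnalyticOnNhd.preSchwarzian isOpen_ball hf hf' 0 (mem_of_mem_nhds h0))
    (differentiableOn_cayleyPow.analyticAt h0) (eventually_of_mem h0 hode)
  rw [schwarzian_eqOn_ball hf hf' (mem_of_mem_nhds h0)]
  simp [hp₀, hp₀', deriv_cayleyPow_zero]

theorem bddAbove_schwarzian_norm_of_mul_preSchwarzian_eq (h₀ : 0 ≤ α) (h₁ : α ≤ 1) :
    BddAbove ((fun z => (1 - ‖z‖ ^ 2) ^ 2 * ‖schwarzian f z‖) '' ball 0 1) := by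
  have hp := AnalyticOnNhd.preSchwarzian isOpen_ball hf hf'
  have hS := schwarzian_eqOn_ball hf hf'
  have hcont : ContinuousOn (schwarzian f) (ball 0 1) :=
    (hp.deriv.continuousOn.sub ((hp.continuousOn.pow 2).div_const 2)).congr hS
  refine bddAbove_image_ball_of_le (C := 38) (by fun_prop) (by norm_num : (1 / 2 : ℝ) < 1)
    fun z hz hz₂ => ?_
  have hz₁ : ‖z‖ < 1 := mem_ball_zero_iff.1 hz
  rw [dist_zero_right] at hz₂
  have hz₂' : ‖z ^ 2‖ < 1 := by rw [norm_pow]; nlinarith [norm_nonneg z]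
  rw [hS hz]
  refine sq_one_sub_norm_sq_mul_norm_deriv_sub_le hz₂.le hz₁ ?_ ?_ (hode z hz) ?_
  · simpa [norm_pow] using norm_cayleyPow_le h₀ h₁ hz₂'
  · simpa [norm_pow] using norm_deriv_cayleyPow_le h₀ h₁ hz₂'
  · exact add_mul_deriv_eq_of_mul_eq_comp_sq (hp z hz).differentiableAt
      (hasDerivAt_cayleyPow hz₂').differentiableAt
      (eventually_of_mem (isOpen_ball.mem_nhds hz) hode)

end ExtremalFunction

theorem schwarzian_norm_sharp_strongly_convex_general (α : ℝ) (hα0 : 0 < α) (hα1 : α < 1)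
    (f : ℂ → ℂ) (hf : DifferentiableOn ℂ f (ball (0:ℂ) 1))
    (hf' : ∀ z ∈ ball (0:ℂ) 1, deriv f z ≠ 0)
    (hode : ∀ z ∈ ball (0:ℂ) 1,
      1 + z * deriv (deriv f) z / deriv f z
        = Complex.exp ((α : ℂ) * Complex.log ((1 + z ^ 2) / (1 - z ^ 2)))) :
    (deriv (deriv (deriv f)) 0 / deriv f 0
        - (3 / 2) * (deriv (deriv f) 0 / deriv f 0) ^ 2 = (2 * α : ℂ)) ∧
    2 * α ≤ sSup {r : ℝ | ∃ z ∈ ball (0:ℂ) 1,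
      r = (1 - ‖z‖ ^ 2) ^ 2 *
        ‖deriv (deriv (deriv f)) z / deriv f z
          - (3 / 2) * (deriv (deriv f) z / deriv f z) ^ 2‖} := by
  have hode' : ∀ z ∈ ball (0 : ℂ) 1, z * preSchwarzian f z = cayleyPow α (z ^ 2) - 1 :=
    fun z hz => by rw [cayleyPow, ← hode z hz, preSchwarzian, mul_div_assoc]; ring
  have hS₀ := schwarzian_zero_eq_of_mul_preSchwarzian_eq hf hf' hode'
  refine ⟨hS₀, le_csSup ?_ ⟨0, mem_ball_self one_pos, ?_⟩⟩
  · refine (bddAbove_schwarzian_norm_of_mul_preSchwarzian_eq hf hf' hode' hα0.le hα1.le).mono ?_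
    rintro _ ⟨z, hz, rfl⟩
    exact ⟨z, hz, rfl⟩
  · change 2 * α = (1 - ‖(0 : ℂ)‖ ^ 2) ^ 2 * ‖schwarzian f 0‖
    rw [hS₀]
    simp [abs_of_pos hα0]

/-- Sharpness of the bound `‖S_f‖ ≤ 2α` for strongly convex functions of order `α`:
the function `f_α` with `1 + z f_α''/f_α' = ((1+z²)/(1-z²))^α` satisfies
`S_{f_α}(0) = 2α`, and hence `sup_{z∈𝔻} (1-|z|²)² |S_{f_α}(z)| ≥ 2α`. -/
theorem schwarzian_norm_sharp_strongly_convex (α : ℝ) (hα0 : 0 < α) (hα1 : α < 1)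
    (f : ℂ → ℂ) (hf : DifferentiableOn ℂ f (ball (0:ℂ) 1))
    (hf0 : f 0 = 0) (hf1 : deriv f 0 = 1)
    (hf' : ∀ z ∈ ball (0:ℂ) 1, deriv f z ≠ 0)
    (hode : ∀ z ∈ ball (0:ℂ) 1,
      1 + z * deriv (deriv f) z / deriv f z
        = Complex.exp ((α : ℂ) * Complex.log ((1 + z ^ 2) / (1 - z ^ 2)))) :
    (deriv (deriv (deriv f)) 0 / deriv f 0
        - (3 / 2) * (deriv (deriv f) 0 / deriv f 0) ^ 2 = (2 * α : ℂ)) ∧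
    2 * α ≤ sSup {r : ℝ | ∃ z ∈ ball (0:ℂ) 1,
      r = (1 - ‖z‖ ^ 2) ^ 2 *
        ‖deriv (deriv (deriv f)) z / deriv f z
          - (3 / 2) * (deriv (deriv f) z / deriv f z) ^ 2‖} :=
  schwarzian_norm_sharp_strongly_convex_general α hα0 hα1 f hf hf' hode
end

section
/- (Dieudonné's lemma.) Fix z, w in the unit disk 𝔻 with z ≠ 0 and |w| ≤ |z|. Then the set of values ω'(z), as ω ranges over all analytic functions ω : 𝔻 → 𝔻 with ω(0) = 0 and ω(z) = w, is exactly the closed disk {v ∈ ℂ : |v − w/z| ≤ (|z|² − |w|²)/(|z|(1 − |z|²))}. -/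
/-!
Write `ω ζ = ζ * φ ζ` with `φ = dslope ω 0`. By the Schwarz lemma `φ` maps the disk into the
closed disk, `φ z = w / z`, and `ω'(z) = w / z + z * φ'(z)`; conversely every such `φ` gives an
admissible `ω`. So the claim is that `φ'(z)` ranges exactly over the Schwarz–Pick disk
`|φ'(z)| ≤ (1 - |φ z|²) / (1 - |z|²)`. If `|φ z| = 1` then `φ` is constant by the maximum
modulus principle; otherwise the bound follows by applying the Schwarz lemma to
`M_{-φ z} ∘ φ ∘ M_z`, where `M_a ζ = (ζ + a) / (1 + ā ζ)` is the disk automorphism sending `0`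
to `a`; it is attained by `M_a ∘ (μ • M_{-z})` for suitable `|μ| ≤ 1`.
-/

open Metric Set Topology ComplexConjugate

noncomputable def diskMobius (a ζ : ℂ) : ℂ := (ζ + a) / (1 + conj a * ζ)

section diskMobius

variable {a u : ℂ}

@[simp] lemma diskMobius_zero (a : ℂ) : diskMobius a 0 = a := by simp [diskMobius]

@[simp] lemma diskMobius_neg_self (a : ℂ) : diskMobius (-a) a = 0 := by simp [diskMobius]

lemma sq_norm_one_add_conj_mul_sub_sq_norm_add (a u : ℂ) :
    ‖1 + conj a * u‖ ^ 2 - ‖u + a‖ ^ 2 = (1 - ‖a‖ ^ 2) * (1 - ‖u‖ ^ 2) := by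
  simp only [Complex.sq_norm, Complex.normSq_apply, Complex.add_re, Complex.add_im,
    Complex.mul_re, Complex.mul_im, Complex.conj_re, Complex.conj_im, Complex.one_re,
    Complex.one_im]
  ring

lemma one_add_conj_mul_ne_zero (ha : ‖a‖ < 1) (hu : ‖u‖ ≤ 1) : 1 + conj a * u ≠ 0 := by
  intro h0
  have h : ‖conj a * u‖ = 1 := by rw [eq_neg_of_add_eq_zero_right h0, norm_neg, norm_one]
  rw [norm_mul, Complex.norm_conj] at h
  exact (mul_lt_one_of_nonneg_of_lt_one_left (norm_nonneg a) ha hu).ne h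

lemma one_sub_sq_norm_diskMobius (h : 1 + conj a * u ≠ 0) :
    1 - ‖diskMobius a u‖ ^ 2 = (1 - ‖a‖ ^ 2) * (1 - ‖u‖ ^ 2) / ‖1 + conj a * u‖ ^ 2 := by
  rw [← sq_norm_one_add_conj_mul_sub_sq_norm_add, diskMobius, norm_div, div_pow, sub_div,
    div_self (pow_ne_zero 2 (norm_ne_zero_iff.2 h))]

lemma norm_diskMobius_lt_one (ha : ‖a‖ < 1) (hu : ‖u‖ < 1) : ‖diskMobius a u‖ < 1 := by
  have hden := one_add_conj_mul_ne_zero ha hu.le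
  have hpos : 0 < 1 - ‖diskMobius a u‖ ^ 2 := by
    rw [one_sub_sq_norm_diskMobius hden]
    have := norm_pos_iff.2 hden
    have := sq_lt_one_iff₀ (norm_nonneg a) |>.2 ha
    have := sq_lt_one_iff₀ (norm_nonneg u) |>.2 hu
    exact div_pos (mul_pos (by linarith) (by linarith)) (by positivity)
  exact (sq_lt_one_iff₀ (norm_nonneg _)).1 (by linarith)

lemma norm_diskMobius_le_one (ha : ‖a‖ < 1) (hu : ‖u‖ ≤ 1) : ‖diskMobius a u‖ ≤ 1 := by
  have hnonneg : 0 ≤ 1 - ‖diskMobius a u‖ ^ 2 := by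
    rw [one_sub_sq_norm_diskMobius (one_add_conj_mul_ne_zero ha hu)]
    have := sq_lt_one_iff₀ (norm_nonneg a) |>.2 ha
    have := sq_le_one_iff₀ (norm_nonneg u) |>.2 hu
    exact div_nonneg (mul_nonneg (by linarith) (by linarith)) (by positivity)
  exact (sq_le_one_iff₀ (norm_nonneg _)).1 (by linarith)

lemma hasDerivAt_diskMobius (h : 1 + conj a * u ≠ 0) :
    HasDerivAt (diskMobius a) ((1 - ‖a‖ ^ 2 : ℂ) / (1 + conj a * u) ^ 2) u := by
  have := ((hasDerivAt_id u).add_const a).div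
    (((hasDerivAt_id u).const_mul (conj a)).const_add 1) h
  refine this.congr_deriv ?_
  rw [← Complex.conj_mul']
  simp only [id]
  ring

lemma hasDerivAt_diskMobius_zero (a : ℂ) : HasDerivAt (diskMobius a) (1 - ‖a‖ ^ 2 : ℂ) 0 := by
  simpa using hasDerivAt_diskMobius (a := a) (u := 0) (by simp)

lemma one_sub_sq_norm_ne_zero (ha : ‖a‖ < 1) : (1 - ‖a‖ ^ 2 : ℂ) ≠ 0 := by
  exact_mod_cast (show (1 : ℝ) - ‖a‖ ^ 2 ≠ 0 by nlinarith [norm_nonneg a])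

lemma hasDerivAt_diskMobius_neg_self (ha : ‖a‖ < 1) :
    HasDerivAt (diskMobius (-a)) (1 - ‖a‖ ^ 2 : ℂ)⁻¹ a := by
  have h : (1 : ℂ) + conj (-a) * a = 1 - ‖a‖ ^ 2 := by
    rw [map_neg, neg_mul, Complex.conj_mul']; ring
  convert hasDerivAt_diskMobius (a := -a) (u := a) (h ▸ one_sub_sq_norm_ne_zero ha) using 1
  rw [h, norm_neg]
  field_simp

lemma differentiableOn_diskMobius (ha : ‖a‖ < 1) :
    DifferentiableOn ℂ (diskMobius a) (closedBall 0 1) := fun _ hu =>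
  (hasDerivAt_diskMobius (one_add_conj_mul_ne_zero ha (mem_closedBall_zero_iff.1 hu)))
    |>.differentiableAt.differentiableWithinAt

lemma mapsTo_diskMobius_ball (ha : ‖a‖ < 1) : MapsTo (diskMobius a) (ball 0 1) (ball 0 1) :=
  fun _ hu => mem_ball_zero_iff.2 <| norm_diskMobius_lt_one ha (mem_ball_zero_iff.1 hu)

lemma mapsTo_diskMobius_closedBall (ha : ‖a‖ < 1) :
    MapsTo (diskMobius a) (closedBall 0 1) (closedBall 0 1) :=
  fun _ hu => mem_closedBall_zero_iff.2 <| norm_diskMobius_le_one ha (mem_closedBall_zero_iff.1 hu)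

end diskMobius

lemma norm_one_sub_sq_norm {a : ℂ} (ha : ‖a‖ ≤ 1) : ‖(1 - ‖a‖ ^ 2 : ℂ)‖ = 1 - ‖a‖ ^ 2 := by
  rw [← Complex.ofReal_pow, ← Complex.ofReal_one, ← Complex.ofReal_sub, Complex.norm_real,
    Real.norm_of_nonneg (by nlinarith [norm_nonneg a])]

lemma deriv_eq_zero_of_norm_eq_one {φ : ℂ → ℂ} {z : ℂ} (hd : DifferentiableOn ℂ φ (ball 0 1))
    (hm : MapsTo φ (ball 0 1) (closedBall 0 1)) (hz : z ∈ ball 0 1) (h1 : ‖φ z‖ = 1) :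
    deriv φ z = 0 := by
  have hnhds : ball (0 : ℂ) 1 ∈ 𝓝 z := isOpen_ball.mem_nhds hz
  have hmax : IsLocalMax (norm ∘ φ) z := Filter.mem_of_superset hnhds fun ζ hζ => by
    simpa [h1] using hm hζ
  have hconst := Complex.eventually_eq_of_isLocalMax_norm
    (Filter.mem_of_superset hnhds fun ζ hζ => hd.differentiableAt (isOpen_ball.mem_nhds hζ)) hmax
  exact (Filter.EventuallyEq.deriv_eq (f := fun _ => φ z) hconst).trans (deriv_const z (φ z))

theorem norm_deriv_le_of_mapsTo_ball {φ : ℂ → ℂ} {z : ℂ} (hd : DifferentiableOn ℂ φ (ball 0 1))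
    (hm : MapsTo φ (ball 0 1) (closedBall 0 1)) (hz : z ∈ ball 0 1) :
    ‖deriv φ z‖ ≤ (1 - ‖φ z‖ ^ 2) / (1 - ‖z‖ ^ 2) := by
  have hz1 : ‖z‖ < 1 := mem_ball_zero_iff.1 hz
  have hz2 : 0 < 1 - ‖z‖ ^ 2 := by nlinarith [norm_nonneg z]
  have ha1 : ‖φ z‖ ≤ 1 := mem_closedBall_zero_iff.1 (hm hz)
  obtain ha | ha := ha1.eq_or_lt
  · rw [deriv_eq_zero_of_norm_eq_one hd hm hz ha, ha]
    simp
  set a := φ z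
  have ha2 : 0 < 1 - ‖a‖ ^ 2 := by nlinarith [norm_nonneg a]
  set h := diskMobius (-a) ∘ φ ∘ diskMobius z
  have hh_diff : DifferentiableOn ℂ h (ball 0 1) :=
    (differentiableOn_diskMobius (by simpa using ha)).comp
      (hd.comp ((differentiableOn_diskMobius hz1).mono ball_subset_closedBall)
        (mapsTo_diskMobius_ball hz1))
      (hm.comp (mapsTo_diskMobius_ball hz1))
  have hh_maps : MapsTo h (ball 0 1) (closedBall (h 0) 1) := by
    have h0 : h 0 = 0 := by simp [h, a]
    rw [h0]
    exact (mapsTo_diskMobius_closedBall (by simpa using ha)).comp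
      (hm.comp (mapsTo_diskMobius_ball hz1))
  have hh_deriv : HasDerivAt h ((1 - ‖a‖ ^ 2 : ℂ)⁻¹ * (deriv φ z * (1 - ‖z‖ ^ 2 : ℂ))) 0 := by
    have hφ : HasDerivAt φ (deriv φ z) (diskMobius z 0) := by
      simpa using (hd.differentiableAt (isOpen_ball.mem_nhds hz)).hasDerivAt
    have hinv : HasDerivAt (diskMobius (-a)) (1 - ‖a‖ ^ 2 : ℂ)⁻¹ (φ (diskMobius z 0)) := by
      simpa using hasDerivAt_diskMobius_neg_self ha
    exact hinv.comp 0 (hφ.comp 0 (hasDerivAt_diskMobius_zero z))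
  have := hh_deriv.deriv ▸ Complex.norm_deriv_le_one_of_mapsTo_ball hh_diff hh_maps one_pos
  rw [norm_mul, norm_mul, norm_inv, norm_one_sub_sq_norm ha.le, norm_one_sub_sq_norm hz1.le] at this
  rw [le_div_iff₀ hz2]
  rwa [inv_mul_le_iff₀ ha2, mul_one] at this

theorem exists_mapsTo_ball_apply_eq_deriv_eq {z a c : ℂ} (hz : ‖z‖ < 1) (ha : ‖a‖ ≤ 1)
    (hc : ‖c‖ ≤ (1 - ‖a‖ ^ 2) / (1 - ‖z‖ ^ 2)) :
    ∃ φ : ℂ → ℂ, DifferentiableOn ℂ φ (ball 0 1) ∧ MapsTo φ (ball 0 1) (closedBall 0 1) ∧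
      φ z = a ∧ deriv φ z = c := by
  have hz2 : 0 < 1 - ‖z‖ ^ 2 := by nlinarith [norm_nonneg z]
  obtain ha | ha := ha.eq_or_lt
  · have hc0 : c = 0 := norm_le_zero_iff.1 (by simpa [ha] using hc)
    exact ⟨fun _ => a, differentiableOn_const a, fun _ _ => mem_closedBall_zero_iff.2 ha.le,
      rfl, hc0 ▸ deriv_const z a⟩
  have ha2 : 0 < 1 - ‖a‖ ^ 2 := by nlinarith [norm_nonneg a]
  -- chosen so that the chain rule gives `deriv φ z = c`
  set μ : ℂ := c * (1 - ‖z‖ ^ 2 : ℂ) / (1 - ‖a‖ ^ 2 : ℂ)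
  have hμ : ‖μ‖ ≤ 1 := by
    rw [norm_div, norm_mul, norm_one_sub_sq_norm hz.le, norm_one_sub_sq_norm ha.le,
      div_le_one ha2, ← le_div_iff₀ hz2]
    exact hc
  have hrot : MapsTo (μ * ·) (ball 0 1) (ball 0 1) := fun u hu => by
    rw [mem_ball_zero_iff, norm_mul] at *
    nlinarith [norm_nonneg u, norm_nonneg μ]
  refine ⟨fun ζ => diskMobius a (μ * diskMobius (-z) ζ), ?_, ?_, by simp, ?_⟩
  · exact (differentiableOn_diskMobius ha).comp
      (((differentiableOn_diskMobius (by simpa)).mono ball_subset_closedBall).const_mul μ)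
      ((hrot.comp (mapsTo_diskMobius_ball (by simpa))).mono_right ball_subset_closedBall)
  · exact ((mapsTo_diskMobius_ball ha).comp
      (hrot.comp (mapsTo_diskMobius_ball (by simpa)))).mono_right ball_subset_closedBall
  · have h1 : HasDerivAt (diskMobius a) (1 - ‖a‖ ^ 2 : ℂ) (μ * diskMobius (-z) z) := by
      simpa using hasDerivAt_diskMobius_zero a
    refine (h1.comp z ((hasDerivAt_diskMobius_neg_self hz).const_mul μ)).deriv.trans ?_
    simp only [μ]
    field_simp [one_sub_sq_norm_ne_zero ha, one_sub_sq_norm_ne_zero hz]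

lemma eq_mul_dslope_zero {ω : ℂ → ℂ} (h0 : ω 0 = 0) : ω = fun ζ => ζ * dslope ω 0 ζ := by
  ext ζ
  simpa [h0] using (sub_smul_dslope ω 0 ζ).symm

lemma mapsTo_dslope_zero_closedBall {ω : ℂ → ℂ} (hd : DifferentiableOn ℂ ω (ball 0 1))
    (hm : MapsTo ω (ball 0 1) (ball 0 1)) (h0 : ω 0 = 0) :
    MapsTo (dslope ω 0) (ball 0 1) (closedBall 0 1) := fun ζ hζ => by
  have hm' : MapsTo ω (ball 0 1) (closedBall (ω 0) 1) := by
    rw [h0]; exact hm.mono_right ball_subset_closedBall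
  simpa using Complex.norm_dslope_le_div_of_mapsTo_ball hd hm' hζ

lemma deriv_id_mul {φ : ℂ → ℂ} {z : ℂ} (hφ : DifferentiableAt ℂ φ z) :
    deriv (fun ζ => ζ * φ ζ) z = φ z + z * deriv φ z := by
  refine ((hasDerivAt_id' z).mul hφ.hasDerivAt).deriv.trans ?_
  ring

lemma mapsTo_id_mul_ball {φ : ℂ → ℂ} (hm : MapsTo φ (ball 0 1) (closedBall 0 1)) :
    MapsTo (fun ζ => ζ * φ ζ) (ball 0 1) (ball 0 1) := fun ζ hζ => by
  have := mem_closedBall_zero_iff.1 (hm hζ)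
  rw [mem_ball_zero_iff] at *
  rw [norm_mul]
  nlinarith [norm_nonneg ζ, norm_nonneg (φ ζ)]

/-- Dieudonné's lemma: for fixed `z ≠ 0` in the unit disk and `|w| ≤ |z|`, the set of
values `ω'(z)`, over all analytic `ω : 𝔻 → 𝔻` with `ω(0) = 0` and `ω(z) = w`, is exactly
the closed disk centered at `w/z` of radius `(|z|² - |w|²)/(|z|(1 - |z|²))`. -/
theorem dieudonne_lemma (z w : ℂ) (hz : z ∈ ball (0:ℂ) 1) (hz0 : z ≠ 0)
    (hw : ‖w‖ ≤ ‖z‖) :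
    {v : ℂ | ∃ ω : ℂ → ℂ, DifferentiableOn ℂ ω (ball (0:ℂ) 1) ∧
        (∀ ζ ∈ ball (0:ℂ) 1, ω ζ ∈ ball (0:ℂ) 1) ∧ ω 0 = 0 ∧ ω z = w ∧ v = deriv ω z}
      = closedBall (w / z)
          ((‖z‖ ^ 2 - ‖w‖ ^ 2)
            / (‖z‖ * (1 - ‖z‖ ^ 2))) := by
  have hz1 : ‖z‖ < 1 := mem_ball_zero_iff.1 hz
  have hz_pos : 0 < ‖z‖ := norm_pos_iff.2 hz0
  have ha : ‖w / z‖ ≤ 1 := by rw [norm_div]; exact div_le_one_of_le₀ hw hz_pos.le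
  have hR : (‖z‖ ^ 2 - ‖w‖ ^ 2) / (‖z‖ * (1 - ‖z‖ ^ 2))
      = ‖z‖ * ((1 - ‖w / z‖ ^ 2) / (1 - ‖z‖ ^ 2)) := by
    rw [norm_div]
    field_simp
  ext v
  rw [Set.mem_ofPred_eq, mem_closedBall, dist_eq_norm, hR]
  constructor
  · rintro ⟨ω, hd, hm, h0, hzw, rfl⟩
    have hφd : DifferentiableOn ℂ (dslope ω 0) (ball 0 1) :=
      (Complex.differentiableOn_dslope (ball_mem_nhds 0 one_pos)).2 hd
    have hφz : dslope ω 0 z = w / z := by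
      rw [dslope_of_ne _ hz0, slope_def_field, h0, hzw, sub_zero, sub_zero]
    rw [eq_mul_dslope_zero h0, deriv_id_mul (hφd.differentiableAt (isOpen_ball.mem_nhds hz)),
      hφz, add_sub_cancel_left, norm_mul]
    exact mul_le_mul_of_nonneg_left
      (hφz ▸ norm_deriv_le_of_mapsTo_ball hφd (mapsTo_dslope_zero_closedBall hd hm h0) hz)
      hz_pos.le
  · intro hv
    obtain ⟨φ, hφd, hφm, hφz, hφ'⟩ := exists_mapsTo_ball_apply_eq_deriv_eq (c := (v - w / z) / z)
      hz1 ha (by rwa [norm_div, div_le_iff₀' hz_pos])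
    refine ⟨fun ζ => ζ * φ ζ, differentiableOn_id.mul hφd, mapsTo_id_mul_ball hφm, zero_mul _,
      by simp [hφz, mul_div_cancel₀ _ hz0], ?_⟩
    rw [deriv_id_mul (hφd.differentiableAt (isOpen_ball.mem_nhds hz)), hφz, hφ',
      mul_div_cancel₀ _ hz0, add_sub_cancel]
end

section
/- For every non-negative integer n, the sum A_n = Σ over triples of non-negative integers (k, l, m) with k + l + m = n of 1/((2k+1)(2l+1)(2m+1)) satisfies A_n ≤ 1. -/
/-!
With `G = ∑ zᵏ/(2k+1)`, the sum is the `n`-th coefficient of `G³`. The Euler operator `θ = z d/dz`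
is a derivation that multiplies the `n`-th coefficient by `n`, and `(2θ + 1) G = 1/(1 - z)`.
Hence `(2θ + m) Gᵐ = m Gᵐ⁻¹ (2θ + 1) G = m Gᵐ⁻¹/(1 - z)`, i.e.
`(2n + m) [zⁿ] Gᵐ = m ∑_{s ≤ n} [zˢ] Gᵐ⁻¹`.
For `m = 2` this gives `[zˢ] G² = (∑_{k ≤ s} 1/(2k+1))/(s+1) ≤ 2/3` for `s ≥ 1`, and then `m = 3`
gives `(2n + 3) [zⁿ] G³ ≤ 3 (1 + 2n/3) = 2n + 3`.
-/

open Finset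

namespace PowerSeries

section CommSemiring

variable {R : Type*} [CommSemiring R]

theorem coeff_X_mul_derivative (f : R⟦X⟧) (n : ℕ) :
    coeff n (X * d⁄dX R f) = n * coeff n f := by
  cases n with
  | zero => simp
  | succ n => rw [coeff_succ_X_mul, coeff_derivative, mul_comm]; push_cast; rfl

theorem coeff_mul_mk_one (f : R⟦X⟧) (n : ℕ) :
    coeff n (f * mk 1) = ∑ k ∈ range (n + 1), coeff k f := by
  simp [coeff_mul, Nat.sum_antidiagonal_eq_sum_range_succ_mk]

theorem coeff_pow_three (f : R⟦X⟧) (n : ℕ) :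
    coeff n (f ^ 3) = ∑ p ∈ antidiagonal n, ∑ q ∈ antidiagonal p.2,
      coeff p.1 f * coeff q.1 f * coeff q.2 f := by
  simp only [pow_three, coeff_mul, mul_sum, mul_assoc]

theorem coeff_pow_succ_euler (f : R⟦X⟧) (m n : ℕ) :
    (2 * n + (m + 1)) * coeff n (f ^ (m + 1)) =
      (m + 1) * coeff n (f ^ m * (C 2 * (X * d⁄dX R f) + f)) := by
  have euler : C 2 * (X * d⁄dX R (f ^ (m + 1))) + C ((m : R) + 1) * f ^ (m + 1) =
      C ((m : R) + 1) * (f ^ m * (C 2 * (X * d⁄dX R f) + f)) := by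
    rw [derivative_pow, add_tsub_cancel_right, ← map_natCast (C (R := R)) (m + 1)]
    push_cast
    ring
  have := congrArg (coeff n) euler
  rw [map_add, coeff_C_mul, coeff_C_mul, coeff_C_mul, coeff_X_mul_derivative] at this
  rw [← this]
  ring

end CommSemiring

noncomputable def invOddSeries : ℝ⟦X⟧ := mk fun k => (2 * k + 1 : ℝ)⁻¹

theorem coeff_invOddSeries (k : ℕ) : coeff k invOddSeries = (2 * k + 1 : ℝ)⁻¹ := coeff_mk _ _

theorem C_two_mul_X_mul_derivative_invOddSeries_add :
    C 2 * (X * d⁄dX ℝ invOddSeries) + invOddSeries = mk 1 := by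
  ext k
  rw [map_add, coeff_C_mul, coeff_X_mul_derivative, coeff_invOddSeries, coeff_mk, Pi.one_apply]
  field_simp

theorem coeff_invOddSeries_pow_succ_mul (m n : ℕ) :
    (2 * n + (m + 1)) * coeff n (invOddSeries ^ (m + 1)) =
      (m + 1) * ∑ s ∈ range (n + 1), coeff s (invOddSeries ^ m) := by
  rw [coeff_pow_succ_euler, C_two_mul_X_mul_derivative_invOddSeries_add, coeff_mul_mk_one]

theorem sum_range_coeff_invOddSeries_le (n : ℕ) :
    ∑ k ∈ range (n + 1), coeff k invOddSeries ≤ 1 + n / 3 := by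
  have tail : ∀ k ∈ range n, coeff (k + 1) invOddSeries ≤ 1 / 3 := by
    intro k _
    rw [coeff_invOddSeries, one_div]
    gcongr
    push_cast
    linarith [k.cast_nonneg (α := ℝ)]
  calc ∑ k ∈ range (n + 1), coeff k invOddSeries
      = ∑ k ∈ range n, coeff (k + 1) invOddSeries + 1 := by
        rw [sum_range_succ', coeff_invOddSeries]
        norm_num
    _ ≤ n * (1 / 3) + 1 := by
        gcongr
        simpa using sum_le_card_nsmul (range n) _ _ tail
    _ = 1 + n / 3 := by ring

theorem coeff_succ_invOddSeries_sq_le (n : ℕ) : coeff (n + 1) (invOddSeries ^ 2) ≤ 2 / 3 := by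
  have h := coeff_invOddSeries_pow_succ_mul 1 (n + 1)
  have hH := sum_range_coeff_invOddSeries_le (n + 1)
  rw [pow_one] at h
  push_cast at h hH
  nlinarith

theorem sum_range_coeff_invOddSeries_sq_le (n : ℕ) :
    ∑ s ∈ range (n + 1), coeff s (invOddSeries ^ 2) ≤ (2 * n + 3 : ℝ) / 3 := by
  have head : coeff 0 (invOddSeries ^ 2) = 1 := by simp [sq, coeff_mul, coeff_invOddSeries]
  calc ∑ s ∈ range (n + 1), coeff s (invOddSeries ^ 2 : ℝ⟦X⟧)
      = ∑ s ∈ range n, coeff (s + 1) (invOddSeries ^ 2) + 1 := by rw [sum_range_succ', head]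
    _ ≤ n * (2 / 3) + 1 := by
        gcongr
        simpa using sum_le_card_nsmul (range n) _ _ fun s _ => coeff_succ_invOddSeries_sq_le s
    _ = (2 * n + 3) / 3 := by ring

theorem coeff_invOddSeries_pow_three_le_one (n : ℕ) : coeff n (invOddSeries ^ 3) ≤ 1 := by
  have h := coeff_invOddSeries_pow_succ_mul 2 n
  have hS := sum_range_coeff_invOddSeries_sq_le n
  push_cast at h
  refine le_of_mul_le_mul_left ?_ (by positivity : (0 : ℝ) < 2 * n + 3)
  linarith

end PowerSeries

open PowerSeries in
/-- For every `n ≥ 0`, the sum `A_n = Σ_{k+l+m=n} 1/((2k+1)(2l+1)(2m+1))` over ordered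
triples of non-negative integers satisfies `A_n ≤ 1`. -/
theorem triple_sum_le_one (n : ℕ) :
    ∑ p ∈ Finset.HasAntidiagonal.antidiagonal n, ∑ q ∈ Finset.HasAntidiagonal.antidiagonal p.2,
      (1 : ℝ) / ((2 * p.1 + 1) * (2 * q.1 + 1) * (2 * q.2 + 1)) ≤ 1 := by
  simpa only [coeff_pow_three, coeff_invOddSeries, one_div, mul_inv] using
    coeff_invOddSeries_pow_three_le_one n
end

section
/- For every non-negative integer n, the identity A_n = (3/(2n+3)) Σ_{j=0}^{n} B_j holds, where A_n = Σ_{k+l+m=n} 1/((2k+1)(2l+1)(2m+1)) (sum over ordered triples of non-negative integers) and B_j = Σ_{k+l=j} 1/((2k+1)(2l+1)) (sum over ordered pairs of non-negative integers). -/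
/-!
Because `k + l + m = n`, the numerator `2n + 3` splits as `(2k+1) + (2l+1) + (2m+1)`, so
`(2n + 3) A_n` is a sum of three triple sums, each of whose summands depends on only two of
the three indices. The triple antidiagonal is invariant under cyclic rotation, so the three
sums agree, and summing out the free index of one of them leaves `∑_{j ≤ n} B_j`.
-/

open Finset

theorem Finset.sum_antidiagonal_antidiagonal_rotate {A M : Type*} [AddCommMonoid A]
    [HasAntidiagonal A] [AddCommMonoid M] (n : A) (f : A → A → A → M) :
    ∑ p ∈ antidiagonal n, ∑ q ∈ antidiagonal p.2, f q.1 q.2 p.1 =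
      ∑ p ∈ antidiagonal n, ∑ q ∈ antidiagonal p.2, f p.1 q.1 q.2 := by
  simp only [sum_sigma']
  apply sum_nbij' (fun x ↦ ⟨(x.2.1, x.2.2 + x.1.1), (x.2.2, x.1.1)⟩)
    (fun x ↦ ⟨(x.2.2, x.1.1 + x.2.1), (x.1.1, x.2.1)⟩) <;>
    aesop (add simp [add_assoc, add_comm, add_left_comm])

theorem Finset.Nat.sum_antidiagonal_snd_eq_sum_range_succ {M : Type*} [AddCommMonoid M] (n : ℕ)
    (g : ℕ → M) :
    ∑ p ∈ antidiagonal n, g p.2 = ∑ j ∈ range (n + 1), g j := by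
  rw [Nat.sum_antidiagonal_eq_sum_range_succ (fun _ j ↦ g j), ← sum_range_reflect]
  refine sum_congr rfl fun j hj ↦ ?_
  have := mem_range.1 hj
  congr 1
  omega

theorem add_add_div_mul_mul {K : Type*} [Field K] {x y z : K} (hx : x ≠ 0) (hy : y ≠ 0)
    (hz : z ≠ 0) : (x + y + z) / (x * y * z) = 1 / (y * z) + 1 / (z * x) + 1 / (x * y) := by
  field_simp

/-- For every `n ≥ 0`, the identity `A_n = (3/(2n+3)) Σ_{j=0}^{n} B_j` holds, where
`A_n = Σ_{k+l+m=n} 1/((2k+1)(2l+1)(2m+1))` (ordered triples) and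
`B_j = Σ_{k+l=j} 1/((2k+1)(2l+1))` (ordered pairs). -/
theorem triple_sum_eq_pair_sums (n : ℕ) :
    ∑ p ∈ Finset.HasAntidiagonal.antidiagonal n, ∑ q ∈ Finset.HasAntidiagonal.antidiagonal p.2,
      (1 : ℝ) / ((2 * p.1 + 1) * (2 * q.1 + 1) * (2 * q.2 + 1))
    = (3 / (2 * n + 3)) * ∑ j ∈ Finset.range (n + 1),
        ∑ p ∈ Finset.HasAntidiagonal.antidiagonal j, (1 : ℝ) / ((2 * p.1 + 1) * (2 * p.2 + 1)) := by
  set g : ℕ → ℕ → ℝ := fun a b ↦ 1 / ((2 * a + 1) * (2 * b + 1))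
  have partial_fractions : ∀ p ∈ antidiagonal n,
      (2 * n + 3 : ℝ) *
          ∑ q ∈ antidiagonal p.2, (1 : ℝ) / ((2 * p.1 + 1) * (2 * q.1 + 1) * (2 * q.2 + 1)) =
        ∑ q ∈ antidiagonal p.2, (g q.1 q.2 + g q.2 p.1 + g p.1 q.1) := by
    intro p hp
    rw [mul_sum]
    refine sum_congr rfl fun q hq ↦ ?_
    have hn : (2 * n + 3 : ℝ) = (2 * p.1 + 1) + (2 * q.1 + 1) + (2 * q.2 + 1) := by
      rw [HasAntidiagonal.mem_antidiagonal] at hp hq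
      rw [← hp, ← hq]
      push_cast
      ring
    rw [hn, mul_one_div, add_add_div_mul_mul] <;> positivity
  have pair_sums : ∑ p ∈ antidiagonal n, ∑ q ∈ antidiagonal p.2, g q.1 q.2 =
      ∑ j ∈ range (n + 1), ∑ p ∈ antidiagonal j, g p.1 p.2 :=
    Nat.sum_antidiagonal_snd_eq_sum_range_succ n fun j ↦ ∑ q ∈ antidiagonal j, g q.1 q.2
  rw [div_mul_eq_mul_div, eq_div_iff (by positivity), mul_comm, mul_sum,
    sum_congr rfl partial_fractions]
  simp only [sum_add_distrib]
  rw [sum_antidiagonal_antidiagonal_rotate n fun _ b c ↦ g b c,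
    ← sum_antidiagonal_antidiagonal_rotate n fun a b _ ↦ g a b, pair_sums]
  ring
end

section
/- Let G(z) = Σ_{n≥0} z^n/(2n+1) (analytic on the unit disk 𝔻) and P(z) = 1 + (8/π²) z G(z)². Then the function Q(z) = 2z P'(z) + 1 − P(z)², analytic on 𝔻, has all Taylor coefficients about z = 0 nonnegative (real and ≥ 0). -/
/-!
Put `c = 8/π²` and `S(z) = z G(z)²`, so that `P = 1 + c S` and `S` has nonnegative Taylor
coefficients. Since `w G(w²) = artanh w`, we have `S(w²) = a²` with `a = artanh w`, and
differentiating, using `sinh (2a) = 2w/(1 - w²)`, gives `2 z S'(z) = a sinh (2a)` at `z = w²`.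
Hence `Q = Φ ∘ S` near `0`, where `Φ(a²) = c a sinh (2a) - 2 c a² - c² a⁴`. The linear
coefficient of `Φ` vanishes, the quadratic one is `c (4/3 - c) ≥ 0` because `π² ≥ 6`, and all
others are nonnegative. A power series with nonnegative coefficients composed with one that
vanishes at `0` and has nonnegative coefficients again has nonnegative coefficients.
-/

open Complex Finset FormalMultilinearSeries
open scoped Nat NNReal

section PowerSeries

variable {𝕜 : Type*} [NontriviallyNormedField 𝕜]

theorem FormalMultilinearSeries.ofScalars_comp_ofScalars_apply_one (a b : ℕ → 𝕜) (n : ℕ) :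
    ((ofScalars 𝕜 a).comp (ofScalars 𝕜 b)) n (fun _ => 1) =
      ∑ c : Composition n, a c.length * ∏ i, b (c.blocksFun i) := by
  simp only [FormalMultilinearSeries.comp, _root_.sum_apply,
    compAlongComposition_apply]
  refine Finset.sum_congr rfl fun c _ => ?_
  simp [ofScalars, applyComposition, List.prod_ofFn]

theorem hasFPowerSeriesOnBall_ofScalars_of_bound {a : ℕ → 𝕜} {f : 𝕜 → 𝕜}
    {r : ℝ≥0} {C : ℝ} (hr : 0 < r) (hC : ∀ n, ‖a n‖ * r ^ n ≤ C)
    (hf : ∀ z, ‖z‖ < r → HasSum (fun n => a n * z ^ n) (f z)) :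
    HasFPowerSeriesOnBall f (ofScalars 𝕜 a) 0 r where
  r_le := (ofScalars 𝕜 a).le_radius_of_bound C fun n => by rw [ofScalars_norm]; exact hC n
  r_pos := by simpa using hr
  hasSum {z} hz := by
    rw [Metric.mem_eball, edist_zero_right, enorm_eq_nnnorm, ENNReal.coe_lt_coe] at hz
    simpa [ofScalars_apply_eq, mul_comm] using hf z hz

theorem HasFPowerSeriesAt.iteratedDeriv_eq [CompleteSpace 𝕜] {f : 𝕜 → 𝕜}
    {p : FormalMultilinearSeries 𝕜 𝕜 𝕜} {x : 𝕜} (hf : HasFPowerSeriesAt f p x)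
    (n : ℕ) : iteratedDeriv n f x = n ! * p n (fun _ => 1) := by
  obtain ⟨r, hr⟩ := hf
  rw [iteratedDeriv_eq_iteratedFDeriv, ← hr.factorial_smul, nsmul_eq_mul]

end PowerSeries

lemma Complex.one_sub_mem_slitPlane_of_norm_lt_one {z : ℂ} (hz : ‖z‖ < 1) :
    1 - z ∈ slitPlane := by
  simpa [sub_eq_add_neg] using mem_slitPlane_of_norm_lt_one (z := -z) (by rwa [norm_neg])

namespace MaMindaRonning

noncomputable def G (z : ℂ) : ℂ := ∑' n : ℕ, z ^ n / (2 * n + 1)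

noncomputable def S (z : ℂ) : ℂ := z * G z ^ 2

noncomputable def coeffG (n : ℕ) : ℝ := (2 * n + 1)⁻¹

noncomputable def coeffS : ℕ → ℝ
  | 0 => 0
  | n + 1 => ∑ p ∈ antidiagonal n, coeffG p.1 * coeffG p.2

lemma coeffG_nonneg (n : ℕ) : 0 ≤ coeffG n := by unfold coeffG; positivity

lemma coeffG_le_one (n : ℕ) : coeffG n ≤ 1 := inv_le_one_of_one_le₀ (by simp)

lemma coeffS_nonneg (n : ℕ) : 0 ≤ coeffS n := by
  cases n with
  | zero => simp [coeffS]
  | succ n => exact sum_nonneg fun p _ => mul_nonneg (coeffG_nonneg _) (coeffG_nonneg _)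

lemma coeffS_le (n : ℕ) : coeffS n ≤ n := by
  cases n with
  | zero => simp [coeffS]
  | succ n =>
    calc coeffS (n + 1) ≤ ∑ _p ∈ antidiagonal n, (1 : ℝ) :=
          sum_le_sum fun p _ => mul_le_one₀ (coeffG_le_one _) (coeffG_nonneg _) (coeffG_le_one _)
      _ = (n + 1 : ℕ) := by simp

lemma summable_norm_coeffG_mul_pow {z : ℂ} (hz : ‖z‖ < 1) :
    Summable fun n => ‖(coeffG n : ℂ) * z ^ n‖ := by
  refine (summable_geometric_of_lt_one (norm_nonneg z) hz).of_nonneg_of_le (fun _ => norm_nonneg _)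
    fun n => ?_
  rw [norm_mul, norm_pow, norm_real, Real.norm_of_nonneg (coeffG_nonneg n)]
  exact mul_le_of_le_one_left (by positivity) (coeffG_le_one n)

lemma hasSum_G {z : ℂ} (hz : ‖z‖ < 1) : HasSum (fun n => (coeffG n : ℂ) * z ^ n) (G z) := by
  have hterm :
      (fun n => (coeffG n : ℂ) * z ^ n) = fun n : ℕ => z ^ n / (2 * (n : ℂ) + 1) := by
    funext n
    simp [coeffG, div_eq_inv_mul]
  have h := (summable_norm_coeffG_mul_pow hz).of_norm.hasSum
  rwa [hterm] at h ⊢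

lemma hasSum_S {z : ℂ} (hz : ‖z‖ < 1) : HasSum (fun n => (coeffS n : ℂ) * z ^ n) (S z) := by
  have hsum := summable_norm_coeffG_mul_pow hz
  have hcauchy : HasSum (fun n => ∑ p ∈ antidiagonal n,
      (coeffG p.1 : ℂ) * z ^ p.1 * ((coeffG p.2 : ℂ) * z ^ p.2)) (G z ^ 2) := by
    rw [sq, ← (hasSum_G hz).tsum_eq,
      tsum_mul_tsum_eq_tsum_sum_antidiagonal_of_summable_norm hsum hsum]
    exact (summable_norm_sum_mul_antidiagonal_of_summable_norm hsum hsum).of_norm.hasSum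
  have hshift : (fun n => (coeffS (n + 1) : ℂ) * z ^ (n + 1)) =
      fun n => z * ∑ p ∈ antidiagonal n,
        (coeffG p.1 : ℂ) * z ^ p.1 * ((coeffG p.2 : ℂ) * z ^ p.2) := by
    funext n
    simp only [coeffS]
    push_cast
    rw [mul_sum, sum_mul]
    refine sum_congr rfl fun p hp => ?_
    rw [← mem_antidiagonal.1 hp]
    ring
  rw [← hasSum_nat_add_iff' 1, hshift]
  simpa [coeffS, S] using hcauchy.mul_left z

lemma S_zero : S 0 = 0 := by simp [S]

lemma hasFPowerSeriesOnBall_S :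
    HasFPowerSeriesOnBall S (ofScalars ℂ fun n => (coeffS n : ℂ)) 0 (2⁻¹ : ℝ≥0) := by
  refine hasFPowerSeriesOnBall_ofScalars_of_bound (r := 2⁻¹) (C := 1) (by norm_num) (fun n => ?_)
    fun z hz => hasSum_S (hz.trans (by norm_num))
  have hn : (n : ℝ) ≤ 2 ^ n := by exact_mod_cast Nat.lt_two_pow_self.le
  rw [norm_real, Real.norm_of_nonneg (coeffS_nonneg n), NNReal.coe_inv, NNReal.coe_ofNat, inv_pow,
    ← div_eq_mul_inv, div_le_one (by positivity)]
  exact (coeffS_le n).trans hn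

lemma differentiableAt_S {z : ℂ} (hz : ‖z‖ < 2⁻¹) : DifferentiableAt ℂ S z :=
  hasFPowerSeriesOnBall_S.analyticAt_of_mem (by
    rw [Metric.mem_eball, edist_zero_right, enorm_eq_nnnorm, ENNReal.coe_lt_coe,
      ← NNReal.coe_lt_coe]
    simpa using hz) |>.differentiableAt

noncomputable def artanh (w : ℂ) : ℂ := (log (1 + w) - log (1 - w)) / 2

lemma hasSum_artanh {w : ℂ} (hw : ‖w‖ < 1) :
    HasSum (fun k : ℕ => w ^ (2 * k + 1) / (2 * k + 1)) (artanh w) := by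
  set f : ℕ → ℂ := fun n => (w ^ n / n - (-w) ^ n / n) / 2
  have hf : HasSum f (artanh w) := by
    have h := (hasSum_taylorSeries_neg_log hw).sub
      (hasSum_taylorSeries_neg_log (z := -w) (by rwa [norm_neg]))
    have hval : (-log (1 - w) - -log (1 - -w)) / 2 = artanh w := by
      simp only [artanh, sub_neg_eq_add]
      ring
    exact hval ▸ h.div_const 2
  have hodd : ∀ n ∉ Set.range (fun k : ℕ => 2 * k + 1), f n = 0 := by
    intro n hn
    have heven : Even n := by
      simpa [← Nat.not_odd_iff_even, Odd, eq_comm] using hn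
    simp [f, heven.neg_pow]
  have hinj : Function.Injective fun k : ℕ => 2 * k + 1 := fun a b h => by simp at h; omega
  convert (hinj.hasSum_iff hodd).mpr hf using 1
  funext k
  simp only [f, Function.comp_apply, (odd_two_mul_add_one k).neg_pow]
  push_cast
  ring

lemma artanh_eq_mul_G {w : ℂ} (hw : ‖w‖ < 1) : artanh w = w * G (w ^ 2) := by
  rw [← (hasSum_artanh hw).tsum_eq, G, ← tsum_mul_left]
  congr 1
  funext k
  rw [← pow_mul, pow_succ']
  ring

lemma S_sq {w : ℂ} (hw : ‖w‖ < 1) : S (w ^ 2) = artanh w ^ 2 := by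
  rw [S, artanh_eq_mul_G hw]
  ring

lemma exp_two_mul_artanh {w : ℂ} (hw : ‖w‖ < 1) : exp (2 * artanh w) = (1 + w) / (1 - w) := by
  rw [artanh, mul_div_cancel₀ _ two_ne_zero, exp_sub,
    exp_log (slitPlane_ne_zero (mem_slitPlane_of_norm_lt_one hw)),
    exp_log (slitPlane_ne_zero (one_sub_mem_slitPlane_of_norm_lt_one hw))]

lemma sinh_two_mul_artanh {w : ℂ} (hw : ‖w‖ < 1) :
    sinh (2 * artanh w) = 2 * w / (1 - w ^ 2) := by
  have h₁ := slitPlane_ne_zero (mem_slitPlane_of_norm_lt_one hw)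
  have h₂ := slitPlane_ne_zero (one_sub_mem_slitPlane_of_norm_lt_one hw)
  rw [sinh, exp_neg, exp_two_mul_artanh hw, show 1 - w ^ 2 = (1 + w) * (1 - w) by ring]
  field_simp
  ring

lemma hasDerivAt_artanh {w : ℂ} (hw : ‖w‖ < 1) : HasDerivAt artanh (1 - w ^ 2)⁻¹ w := by
  have h₁ := mem_slitPlane_of_norm_lt_one hw
  have h₂ := one_sub_mem_slitPlane_of_norm_lt_one hw
  have h : HasDerivAt artanh ((1 / (1 + w) - -1 / (1 - w)) / 2) w :=
    ((((hasDerivAt_id' w).const_add 1).clog h₁).sub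
      (((hasDerivAt_id' w).const_sub 1).clog h₂)).div_const 2
  refine h.congr_deriv ?_
  rw [show 1 - w ^ 2 = (1 + w) * (1 - w) by ring]
  field_simp [slitPlane_ne_zero h₁, slitPlane_ne_zero h₂]
  ring

lemma two_mul_sq_mul_deriv_S {w : ℂ} (hw : ‖w‖ ^ 2 < 2⁻¹) :
    2 * w ^ 2 * deriv S (w ^ 2) = artanh w * sinh (2 * artanh w) := by
  have hw₁ : ‖w‖ < 1 := by nlinarith [norm_nonneg w]
  have hS : HasDerivAt (fun u => S (u ^ 2)) (deriv S (w ^ 2) * (2 * w)) w :=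
    (differentiableAt_S (by rwa [norm_pow])).hasDerivAt.comp w (by simpa using hasDerivAt_pow 2 w)
  have hartanh : HasDerivAt (fun u => artanh u ^ 2) (2 * artanh w * (1 - w ^ 2)⁻¹) w := by
    simpa using (hasDerivAt_artanh hw₁).fun_pow 2
  have hsq : (fun u => S (u ^ 2)) =ᶠ[nhds w] fun u => artanh u ^ 2 :=
    ((isOpen_lt continuous_norm continuous_const).eventually_mem hw₁).mono fun u hu => S_sq hu
  have hderiv := hS.unique (hartanh.congr_of_eventuallyEq hsq)
  calc 2 * w ^ 2 * deriv S (w ^ 2) = w * (deriv S (w ^ 2) * (2 * w)) := by ring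
    _ = artanh w * (2 * w / (1 - w ^ 2)) := by rw [hderiv]; ring
    _ = artanh w * sinh (2 * artanh w) := by rw [sinh_two_mul_artanh hw₁]

noncomputable def c : ℝ := 8 / Real.pi ^ 2

noncomputable def coeffSinh : ℕ → ℝ
  | 0 => 0
  | k + 1 => 2 ^ (2 * k + 1) / (2 * k + 1)!

noncomputable def coeffΦ (n : ℕ) : ℝ :=
  c * coeffSinh n - (if n = 1 then 2 * c else 0) - (if n = 2 then c ^ 2 else 0)

noncomputable def Φ (u : ℂ) : ℂ := ∑' n : ℕ, (coeffΦ n : ℂ) * u ^ n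

lemma hasSum_coeffSinh (v : ℂ) :
    HasSum (fun n => (coeffSinh n : ℂ) * (v ^ 2) ^ n) (v * sinh (2 * v)) := by
  have hshift : (fun n => (coeffSinh (n + 1) : ℂ) * (v ^ 2) ^ (n + 1)) =
      fun k => v * ((2 * v) ^ (2 * k + 1) / (2 * k + 1)!) := by
    funext k
    simp only [coeffSinh]
    push_cast
    ring
  rw [← hasSum_nat_add_iff' 1, hshift]
  simpa [coeffSinh] using (hasSum_sinh (2 * v)).mul_left v

lemma hasSum_coeffΦ (v : ℂ) : HasSum (fun n => (coeffΦ n : ℂ) * (v ^ 2) ^ n)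
    (c * (v * sinh (2 * v)) - 2 * c * v ^ 2 - c ^ 2 * (v ^ 2) ^ 2) := by
  have hterm : (fun n => (coeffΦ n : ℂ) * (v ^ 2) ^ n) = fun n =>
      c * ((coeffSinh n : ℂ) * (v ^ 2) ^ n) - (if n = 1 then 2 * c * v ^ 2 else 0) -
        (if n = 2 then c ^ 2 * (v ^ 2) ^ 2 else 0) := by
    funext n
    simp only [coeffΦ]
    split_ifs <;> (try subst_vars) <;> (try omega) <;> push_cast <;> ring
  rw [hterm]
  exact (((hasSum_coeffSinh v).mul_left _).sub (hasSum_ite_eq 1 _)).sub (hasSum_ite_eq 2 _)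

lemma Φ_sq (v : ℂ) : Φ (v ^ 2) = c * (v * sinh (2 * v)) - 2 * c * v ^ 2 - c ^ 2 * (v ^ 2) ^ 2 :=
  (hasSum_coeffΦ v).tsum_eq

lemma c_pos : 0 < c := by unfold c; positivity

lemma c_le_four_thirds : c ≤ 4 / 3 := by
  rw [c, div_le_div_iff₀ (by positivity) (by norm_num)]
  nlinarith [Real.pi_gt_three]

lemma coeffSinh_nonneg (n : ℕ) : 0 ≤ coeffSinh n := by
  cases n <;> simp only [coeffSinh] <;> positivity

lemma coeffSinh_mul_le (n : ℕ) : coeffSinh n * 4⁻¹ ^ n ≤ 1 := by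
  cases n with
  | zero => simp [coeffSinh]
  | succ k =>
    simp only [coeffSinh]
    have h : (1 : ℝ) ≤ (2 * k + 1)! := by exact_mod_cast (2 * k + 1).factorial_pos
    rw [pow_succ, pow_mul, inv_pow]
    field_simp
    norm_num [pow_succ]
    nlinarith [pow_pos (by norm_num : (0 : ℝ) < 4) k]

lemma coeffΦ_nonneg (n : ℕ) : 0 ≤ coeffΦ n := by
  have := c_pos
  match n with
  | 0 => simp [coeffΦ, coeffSinh]
  | 1 => simp [coeffΦ, coeffSinh, mul_comm]
  | 2 => norm_num [coeffΦ, coeffSinh, Nat.factorial]; nlinarith [c_le_four_thirds]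
  | n + 3 => simp [coeffΦ]; exact mul_nonneg c_pos.le (coeffSinh_nonneg _)

lemma coeffΦ_le (n : ℕ) : coeffΦ n ≤ c * coeffSinh n := by
  have := c_pos
  unfold coeffΦ
  split_ifs <;> nlinarith

lemma hasFPowerSeriesOnBall_Φ :
    HasFPowerSeriesOnBall Φ (ofScalars ℂ fun n => (coeffΦ n : ℂ)) 0 (4⁻¹ : ℝ≥0) := by
  refine hasFPowerSeriesOnBall_ofScalars_of_bound (r := 4⁻¹) (C := c) (by norm_num) (fun n => ?_)
    fun u _ => ?_
  · rw [norm_real, Real.norm_of_nonneg (coeffΦ_nonneg n), NNReal.coe_inv, NNReal.coe_ofNat]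
    calc coeffΦ n * 4⁻¹ ^ n ≤ c * (coeffSinh n * 4⁻¹ ^ n) := by
          rw [← mul_assoc]; gcongr; exact coeffΦ_le n
      _ ≤ c := mul_le_of_le_one_right c_pos.le (coeffSinh_mul_le n)
  · obtain ⟨v, rfl⟩ := IsAlgClosed.exists_pow_nat_eq u two_pos
    exact (Φ_sq v).symm ▸ hasSum_coeffΦ v

lemma Φ_S_eq {z : ℂ} (hz : ‖z‖ < 2⁻¹) :
    Φ (S z) = 2 * z * (c * deriv S z) + 1 - (1 + c * S z) ^ 2 := by
  obtain ⟨w, rfl⟩ := IsAlgClosed.exists_pow_nat_eq z two_pos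
  rw [norm_pow] at hz
  have hw : ‖w‖ < 1 := by nlinarith [norm_nonneg w]
  rw [S_sq hw, Φ_sq]
  linear_combination -(c : ℂ) * two_mul_sq_mul_deriv_S hz

end MaMindaRonning

open MaMindaRonning in
/-- Let `G(z) = Σ_{n≥0} zⁿ/(2n+1)` and `P(z) = 1 + (8/π²) z G(z)²` (the Ma–Minda–Rønning
function for uniformly convex functions). Then `Q(z) = 2z P'(z) + 1 - P(z)²` has all
Taylor coefficients about `0` real and nonnegative; equivalently, all iterated
derivatives at `0` are nonnegative reals. -/
theorem Quc_coeff_nonneg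
    (G : ℂ → ℂ) (hG : ∀ z : ℂ, G z = ∑' n : ℕ, z ^ n / (2 * n + 1))
    (P : ℂ → ℂ) (hP : ∀ z : ℂ, P z = 1 + ((8 / Real.pi ^ 2 : ℝ) : ℂ) * z * G z ^ 2)
    (Q : ℂ → ℂ) (hQ : ∀ z : ℂ, Q z = 2 * z * deriv P z + 1 - P z ^ 2) (n : ℕ) :
    ∃ r : ℝ, 0 ≤ r ∧ iteratedDeriv n Q 0 = (r : ℂ) := by
  have hP' : P = fun z => 1 + (c : ℂ) * S z := by
    funext z
    rw [hP, S, c, show G = MaMindaRonning.G from funext hG]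
    ring
  have hQ' : Q =ᶠ[nhds 0] Φ ∘ S := by
    filter_upwards [Metric.ball_mem_nhds (0 : ℂ) (by norm_num : (0 : ℝ) < 2⁻¹)] with z hz
    rw [hQ, hP', deriv_const_add', deriv_const_mul_field', Function.comp_apply,
      Φ_S_eq (mem_ball_zero_iff.mp hz)]
  have hseries : HasFPowerSeriesAt Q
      ((ofScalars ℂ fun n => (coeffΦ n : ℂ)).comp
        (ofScalars ℂ fun n => (coeffS n : ℂ))) 0 :=
    ((S_zero ▸ hasFPowerSeriesOnBall_Φ.hasFPowerSeriesAt).comp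
      hasFPowerSeriesOnBall_S.hasFPowerSeriesAt).congr hQ'.symm
  refine ⟨n ! * ∑ σ : Composition n, coeffΦ σ.length * ∏ i, coeffS (σ.blocksFun i),
    mul_nonneg (by positivity) (sum_nonneg fun σ _ =>
      mul_nonneg (coeffΦ_nonneg _) (prod_nonneg fun i _ => coeffS_nonneg _)), ?_⟩
  rw [hseries.iteratedDeriv_eq, ofScalars_comp_ofScalars_apply_one]
  push_cast
  rfl
end

section
/- Let 0 < α ≤ 1 and P_α(s) = ((1+s)/(1−s))^α for real 0 < s < 1, and let h(s) = α((1−α) P_α(s)² + (2α(1−s)/(1+s)) P_α(s) − (1+α)). If 0 < α < 1, then h is strictly increasing on (0,1) and satisfies h(s) > h(0) = 0 for all 0 < s < 1; if α = 1, then h ≡ 0; in particular h(s) ≥ 0 for all 0 < s < 1 and all 0 < α ≤ 1. -/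
open Set

/-- For `0 < α ≤ 1` and `P_α(s) = ((1+s)/(1-s))^α` (real power), the function
`h(s) = α((1-α) P_α(s)² + (2α(1-s)/(1+s)) P_α(s) - (1+α))` is strictly increasing on
`(0,1)` and positive there when `α < 1`; `h(0) = 0`; when `α = 1`, `h ≡ 0` on `(0,1)`;
and in all cases `h ≥ 0` on `(0,1)`. -/
theorem h_monotone_nonneg (α : ℝ) (hα0 : 0 < α) (hα1 : α ≤ 1)
    (P : ℝ → ℝ) (hP : ∀ s : ℝ, P s = ((1 + s) / (1 - s)) ^ α)
    (h : ℝ → ℝ)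
    (hh : ∀ s : ℝ, h s =
      α * ((1 - α) * P s ^ 2 + (2 * α * (1 - s) / (1 + s)) * P s - (1 + α))) :
    (α < 1 → StrictMonoOn h (Ioo (0:ℝ) 1)) ∧
    h 0 = 0 ∧
    (α < 1 → ∀ s ∈ Ioo (0:ℝ) 1, 0 < h s) ∧
    (α = 1 → ∀ s ∈ Ioo (0:ℝ) 1, h s = 0) ∧
    (∀ s ∈ Ioo (0:ℝ) 1, 0 ≤ h s) := by
  have hfun : h = fun s => α * ((1 - α) * (((1+s)/(1-s))^α) ^ 2 +
      (2 * α * (1 - s) / (1 + s)) * (((1+s)/(1-s))^α) - (1 + α)) := by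
    funext s; rw [hh, hP]
  have key : ∀ s ∈ Ioo (-1:ℝ) 1, HasDerivAt h
      (4*α^2*(1-α)*((1+s)/(1-s))^α*(((1+s)/(1-s))^α/((1-s)*(1+s)) - 1/(1+s)^2)) s := by
    intro s hs
    obtain ⟨hm1, hl1⟩ := hs
    have hs1 : (0:ℝ) < 1 - s := by linarith
    have hs2 : (0:ℝ) < 1 + s := by linarith
    have gpos : 0 < (1+s)/(1-s) := div_pos hs2 hs1
    have hg : HasDerivAt (fun s : ℝ => (1+s)/(1-s)) (2/(1-s)^2) s := by
      have h1' : HasDerivAt (fun s : ℝ => 1+s) 1 s := (hasDerivAt_id s).const_add 1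
      have h2' : HasDerivAt (fun s : ℝ => 1-s) (-1) s := (hasDerivAt_id s).const_sub 1
      have := h1'.div h2' (ne_of_gt hs1)
      refine this.congr_deriv ?_
      field_simp; ring
    have hPd : HasDerivAt (fun s : ℝ => ((1+s)/(1-s))^α)
        (α*((1+s)/(1-s))^(α-1)*(2/(1-s)^2)) s := by
      have := hg.rpow_const (p := α) (Or.inl (ne_of_gt gpos))
      refine this.congr_deriv ?_
      ring
    have hq : HasDerivAt (fun s : ℝ => 2*α*(1-s)/(1+s)) ((-4*α)/(1+s)^2) s := by
      have h1' : HasDerivAt (fun s : ℝ => 2*α*(1-s)) (2*α*(-1)) s :=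
        ((hasDerivAt_id s).const_sub 1).const_mul (2*α)
      have h2' : HasDerivAt (fun s : ℝ => 1+s) 1 s := (hasDerivAt_id s).const_add 1
      have := h1'.div h2' (ne_of_gt hs2)
      refine this.congr_deriv ?_
      field_simp; ring
    rw [hfun]
    have hD := ((((hPd.pow 2).const_mul (1-α)).add (hq.mul hPd)).sub_const (1+α)).const_mul α
    refine hD.congr_deriv ?_
    rw [Real.rpow_sub gpos, Real.rpow_one]
    field_simp
    ring
  have h0 : h 0 = 0 := by
    rw [hh 0, hP 0]; norm_num; right; ring
  -- strict monotonicity on Ico 0 1 when α < 1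
  have hmono : α < 1 → StrictMonoOn h (Ico (0:ℝ) 1) := by
    intro hlt
    apply strictMonoOn_of_deriv_pos (convex_Ico 0 1)
    · intro x hx
      exact ((key x ⟨by linarith [hx.1], hx.2⟩).continuousAt).continuousWithinAt
    · intro x hx
      rw [interior_Ico] at hx
      obtain ⟨hx0, hx1⟩ := hx
      have hmem : x ∈ Ioo (-1:ℝ) 1 := ⟨by linarith, hx1⟩
      rw [(key x hmem).deriv]
      have hs1 : (0:ℝ) < 1 - x := by linarith
      have hs2 : (0:ℝ) < 1 + x := by linarith
      have g1 : 1 < (1+x)/(1-x) := (one_lt_div hs1).mpr (by linarith)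
      have P1 : 1 < ((1+x)/(1-x))^α := Real.one_lt_rpow_iff_of_pos (by linarith) |>.mpr (Or.inl ⟨g1, hα0⟩)
      have hbr : 1/(1+x)^2 < ((1+x)/(1-x))^α/((1-x)*(1+x)) := by
        have d1 : (0:ℝ) < (1-x)*(1+x) := mul_pos hs1 hs2
        have d2 : (1-x)*(1+x) < (1+x)^2 := by nlinarith
        calc 1/(1+x)^2 < 1/((1-x)*(1+x)) := by
              apply one_div_lt_one_div_of_lt d1 d2
          _ ≤ ((1+x)/(1-x))^α/((1-x)*(1+x)) := by
              gcongr
      have h4 : 0 < 4*α^2*(1-α) := by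
        have := pow_pos hα0 2; nlinarith
      have hPpos : 0 < ((1+x)/(1-x))^α := by positivity
      have hbk : 0 < ((1+x)/(1-x))^α/((1-x)*(1+x)) - 1/(1+x)^2 := by linarith
      exact mul_pos (mul_pos h4 hPpos) hbk
  refine ⟨fun hlt => (hmono hlt).mono Ioo_subset_Ico_self, h0, ?_, ?_, ?_⟩
  · intro hlt s hs
    have := hmono hlt (⟨le_refl 0, one_pos⟩ : (0:ℝ) ∈ Ico (0:ℝ) 1) ⟨hs.1.le, hs.2⟩ hs.1
    rwa [h0] at this
  · intro hα s hs
    rw [hh, hP, hα]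
    have hs1 : (0:ℝ) < 1 - s := by linarith [hs.2]
    have hs2 : (0:ℝ) < 1 + s := by linarith [hs.1]
    rw [Real.rpow_one]
    field_simp
    ring
  · intro s hs
    rcases lt_or_eq_of_le hα1 with hlt | heq
    · have := hmono hlt (⟨le_refl 0, one_pos⟩ : (0:ℝ) ∈ Ico (0:ℝ) 1) ⟨hs.1.le, hs.2⟩ hs.1
      rw [h0] at this; exact this.le
    · rw [hh, hP, heq]
      have hs1 : (0:ℝ) < 1 - s := by linarith [hs.2]
      have hs2 : (0:ℝ) < 1 + s := by linarith [hs.1]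
      rw [Real.rpow_one]
      have : (1 - 1) * ((1 + s) / (1 - s)) ^ 2 + 2 * 1 * (1 - s) / (1 + s) * ((1 + s) / (1 - s)) - (1 + 1) = 0 := by
        field_simp
        norm_num
      rw [this]; simp
end

section
/- For every 0 < α ≤ 1 and all real numbers s, t with 0 < s < t < 1, the inequality ((1−t²)²/(2t²))(1 − P_α(s)²) + 2α((1−t²)(s+t²)/(t²(1+s))) P_α(s) ≤ 2α holds, where P_α(s) = ((1+s)/(1−s))^α. -/
/-!
With `σ = (1 + s) / (1 - s)` and `P = σ ^ α`, the quantity `2 t² σ (2α - F)` is a quadratic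
polynomial in `u = t²` whose discriminant is `-16 α σ g`, where
`g = (1 - α) P² σ + 2 α P - (1 + α) σ`. Writing `σ = eˣ`, the inequality `g ≥ 0` is the sum of
the tangent-line bounds `e^y ≥ 1 + y` at `y = 2αx` and `y = (α - 1)x` with weights `1 - α` and
`2α`, whose linear terms cancel. Hence the quadratic is nonnegative for every `u`.
-/

open Real

theorem quadratic_nonneg_of_discrim_nonpos {K : Type*} [Field K] [LinearOrder K]
    [IsStrictOrderedRing K] {a b c : K} (ha : 0 < a) (h : discrim a b c ≤ 0) (x : K) :
    0 ≤ a * (x * x) + b * x + c := by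
  have key : 4 * a * (a * (x * x) + b * x + c) = (2 * a * x + b) ^ 2 - discrim a b c := by
    rw [discrim]; ring
  refine nonneg_of_mul_nonneg_right ?_ (by positivity : 0 < 4 * a)
  rw [key]
  nlinarith [sq_nonneg (2 * a * x + b)]

theorem one_add_le_sub_mul_exp_add_mul_exp {α : ℝ} (hα0 : 0 ≤ α) (hα1 : α ≤ 1) (x : ℝ) :
    1 + α ≤ (1 - α) * exp (2 * α * x) + 2 * α * exp ((α - 1) * x) := by
  nlinarith [mul_le_mul_of_nonneg_left (add_one_le_exp (2 * α * x)) (sub_nonneg.2 hα1),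
    mul_le_mul_of_nonneg_left (add_one_le_exp ((α - 1) * x)) hα0]

theorem one_add_mul_le_sub_mul_rpow_add_mul_rpow {α σ : ℝ} (hα0 : 0 ≤ α) (hα1 : α ≤ 1)
    (hσ : 0 < σ) :
    (1 + α) * σ ≤ (1 - α) * (σ ^ α) ^ 2 * σ + 2 * α * σ ^ α := by
  obtain ⟨x, rfl⟩ : ∃ x, exp x = σ := ⟨log σ, exp_log hσ⟩
  rw [← exp_mul]
  calc (1 + α) * exp x
      ≤ ((1 - α) * exp (2 * α * x) + 2 * α * exp ((α - 1) * x)) * exp x :=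
        mul_le_mul_of_nonneg_right (one_add_le_sub_mul_exp_add_mul_exp hα0 hα1 x) (exp_pos x).le
    _ = (1 - α) * exp (x * α) ^ 2 * exp x + 2 * α * exp (x * α) := by
        rw [← exp_nat_mul, add_mul, mul_assoc (2 * α), ← exp_add]
        ring_nf

def gapQuadratic (α σ P u : ℝ) : ℝ :=
  ((P ^ 2 - 1) * σ + 2 * α * P + 2 * α * P * σ) * (u * u)
    + 2 * (2 * α * σ - (P ^ 2 - 1) * σ - 2 * α * P) * u
    + ((P ^ 2 - 1) * σ + 2 * α * P - 2 * α * P * σ)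

theorem gapQuadratic_nonneg {α σ P : ℝ} (hα : 0 < α) (hσ : 0 < σ) (hP : 0 ≤ P)
    (h : (1 + α) * σ ≤ (1 - α) * P ^ 2 * σ + 2 * α * P) (u : ℝ) :
    0 ≤ gapQuadratic α σ P u := by
  apply quadratic_nonneg_of_discrim_nonpos
  -- by `h`, the leading coefficient is at least `α σ (1 + P)²`
  · nlinarith [mul_pos (mul_pos hα hσ) (by positivity : (0:ℝ) < (1 + P) ^ 2)]
  · have hdisc : discrim ((P ^ 2 - 1) * σ + 2 * α * P + 2 * α * P * σ)
        (2 * (2 * α * σ - (P ^ 2 - 1) * σ - 2 * α * P))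
        ((P ^ 2 - 1) * σ + 2 * α * P - 2 * α * P * σ)
        = -(16 * α * σ * ((1 - α) * P ^ 2 * σ + 2 * α * P - (1 + α) * σ)) := by
      rw [discrim]; ring
    rw [hdisc, neg_nonpos]
    exact mul_nonneg (by positivity) (by linarith)

theorem two_mul_sub_eq_gapQuadratic_div (α P s t : ℝ) (hs₀ : -1 < s) (hs₁ : s < 1)
    (ht : t ≠ 0) :
    2 * α - ((1 - t ^ 2) ^ 2 / (2 * t ^ 2) * (1 - P ^ 2)
        + 2 * α * ((1 - t ^ 2) * (s + t ^ 2) / (t ^ 2 * (1 + s))) * P)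
      = gapQuadratic α ((1 + s) / (1 - s)) P (t ^ 2) / (2 * t ^ 2 * ((1 + s) / (1 - s))) := by
  have h₀ : 1 + s ≠ 0 := by linarith
  have h₁ : 1 - s ≠ 0 := by linarith
  rw [gapQuadratic]
  field_simp
  ring

/-- Key inequality for the sharp norm estimate `N(P_α) = 2α`: for `0 < α ≤ 1` and
`0 < s < t < 1`, with `P_α(s) = ((1+s)/(1-s))^α`,
`((1-t²)²/(2t²))(1 - P_α(s)²) + 2α((1-t²)(s+t²)/(t²(1+s))) P_α(s) ≤ 2α`. -/
theorem F_le_two_alpha (α : ℝ) (hα0 : 0 < α) (hα1 : α ≤ 1)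
    (s t : ℝ) (hs : 0 < s) (hst : s < t) (ht : t < 1) :
    (1 - t ^ 2) ^ 2 / (2 * t ^ 2) * (1 - (((1 + s) / (1 - s)) ^ α) ^ 2)
      + 2 * α * ((1 - t ^ 2) * (s + t ^ 2) / (t ^ 2 * (1 + s))) * ((1 + s) / (1 - s)) ^ α
      ≤ 2 * α := by
  have ht₀ : 0 < t := hs.trans hst
  have hσ : 0 < (1 + s) / (1 - s) := div_pos (by linarith) (by linarith)
  have hgap := gapQuadratic_nonneg hα0 hσ (rpow_nonneg hσ.le α)
    (one_add_mul_le_sub_mul_rpow_add_mul_rpow hα0.le hα1 hσ) (t ^ 2)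
  rw [← sub_nonneg, two_mul_sub_eq_gapQuadratic_div α _ s t (by linarith) (by linarith) ht₀.ne']
  exact div_nonneg hgap (by positivity)
end

section
/- For all real numbers s, t with 0 < s < t < 1, the inequality ((1−t²)²/(2t²))(1 − P(s)²) + ((1−t²)(1−s)(s+t²)/t²) P'(s) ≤ 8/π² holds, where G(s) = Σ_{n≥0} s^n/(2n+1), P(s) = 1 + (8/π²) s G(s)², and P'(s) = 8G(s)/(π²(1−s)). -/
/-!
Write `g = G(s)`, `c = 8/π²` and `u = 1 - t²`. After clearing the denominator `t²`, the claim
says that a quadratic polynomial in `u` with positive leading coefficient is nonnegative; its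
discriminant is `c² ((1 - (1 - s) g)² - 2 c s² g⁴)`. So it suffices that
`π (1 - (1 - s) g) ≤ 4 s g²`, which follows from the crude bounds `1 + s/3 ≤ g ≤ 1/(1 - s)` on
the series together with `π ≤ 4`.
-/

open Real

section OddPowerSeries

variable {s : ℝ}

theorem pow_div_two_mul_add_one_le (hs : 0 ≤ s) (n : ℕ) : s ^ n / (2 * n + 1) ≤ s ^ n :=
  div_le_self (by positivity) (by linarith [n.cast_nonneg (α := ℝ)])

theorem summable_pow_div_two_mul_add_one (hs0 : 0 ≤ s) (hs1 : s < 1) :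
    Summable fun n : ℕ => s ^ n / (2 * n + 1) :=
  (summable_geometric_of_lt_one hs0 hs1).of_nonneg_of_le (fun _ => by positivity)
    (pow_div_two_mul_add_one_le hs0)

theorem one_add_div_three_le_tsum_pow_div_two_mul_add_one (hs0 : 0 ≤ s) (hs1 : s < 1) :
    1 + s / 3 ≤ ∑' n : ℕ, s ^ n / (2 * n + 1) := by
  have h := (summable_pow_div_two_mul_add_one hs0 hs1).sum_le_tsum (Finset.range 2)
    (fun _ _ => by positivity)
  norm_num [Finset.sum_range_succ] at h
  linarith

theorem tsum_pow_div_two_mul_add_one_le_inv (hs0 : 0 ≤ s) (hs1 : s < 1) :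
    ∑' n : ℕ, s ^ n / (2 * n + 1) ≤ (1 - s)⁻¹ :=
  tsum_geometric_of_lt_one hs0 hs1 ▸ (summable_pow_div_two_mul_add_one hs0 hs1).tsum_le_tsum
    (pow_div_two_mul_add_one_le hs0) (summable_geometric_of_lt_one hs0 hs1)

end OddPowerSeries

theorem sq_one_sub_mul_le {s g : ℝ} (hs : 0 ≤ s) (hg_lower : 1 + s / 3 ≤ g)
    (hg_upper : (1 - s) * g ≤ 1) :
    (1 - (1 - s) * g) ^ 2 ≤ 2 * (8 / π ^ 2) * s ^ 2 * g ^ 4 := by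
  have hcoef : 0 ≤ π - π * s + 4 * s := by nlinarith [pi_le_four, pi_pos]
  -- `(1 + s/3) (π - π s + 4 s) - π = s (4 - 2π/3) + s² (4 - π)/3 ≥ 0`
  have hlin : π * (1 - (1 - s) * g) ≤ 4 * s * g := by
    nlinarith [mul_le_mul_of_nonneg_right hg_lower hcoef, pi_le_four]
  have hquad : π * (1 - (1 - s) * g) ≤ 4 * s * g ^ 2 := by nlinarith
  have hrhs : 2 * (8 / π ^ 2) * s ^ 2 * g ^ 4 = (4 * s * g ^ 2 / π) ^ 2 := by
    field_simp; ring
  rw [hrhs]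
  exact pow_le_pow_left₀ (by linarith) ((le_div_iff₀' pi_pos).2 hquad) 2

theorem F_le_of_sq_one_sub_mul_le {c s g v : ℝ} (hc : 0 < c) (hs : 0 ≤ s) (hg : 0 < g)
    (hv : 0 < v) (h : (1 - (1 - s) * g) ^ 2 ≤ 2 * c * s ^ 2 * g ^ 4) :
    (1 - v) ^ 2 / (2 * v) * (1 - (1 + c * s * g ^ 2) ^ 2) + (1 - v) * (s + v) / v * (c * g)
      ≤ c := by
  set p := c * s * g ^ 2
  set a := p * (2 + p) / 2 + c * g
  set b := -(c + (1 + s) * (c * g))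
  have hdisc : discrim a b c = c ^ 2 * ((1 - (1 - s) * g) ^ 2 - 2 * c * s ^ 2 * g ^ 4) := by
    simp only [discrim, a, b, p]; ring
  have hQ : 0 ≤ a * ((1 - v) * (1 - v)) + b * (1 - v) + c :=
    quadratic_nonneg_of_discrim_nonpos (by positivity)
      (hdisc ▸ mul_nonpos_of_nonneg_of_nonpos (sq_nonneg c) (by linarith)) _
  have hF : c - ((1 - v) ^ 2 / (2 * v) * (1 - (1 + p) ^ 2) + (1 - v) * (s + v) / v * (c * g))
      = (a * ((1 - v) * (1 - v)) + b * (1 - v) + c) / v := by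
    simp only [a, b]; field_simp; ring
  exact sub_nonneg.1 (hF ▸ div_nonneg hQ hv.le)

/-- Key inequality for the sharp norm estimate `N(P) = 8/π²`: for `0 < s < t < 1`, with
`G(s) = Σ_{n≥0} sⁿ/(2n+1)`, `P(s) = 1 + (8/π²) s G(s)²` and `P'(s) = 8G(s)/(π²(1-s))`,
`((1-t²)²/(2t²))(1 - P(s)²) + ((1-t²)(1-s)(s+t²)/t²) P'(s) ≤ 8/π²`. -/
theorem F_le_eight_div_pi_sq
    (G : ℝ → ℝ) (hG : ∀ s : ℝ, G s = ∑' n : ℕ, s ^ n / (2 * n + 1))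
    (s t : ℝ) (hs : 0 < s) (hst : s < t) (ht : t < 1) :
    (1 - t ^ 2) ^ 2 / (2 * t ^ 2) * (1 - (1 + 8 / Real.pi ^ 2 * s * G s ^ 2) ^ 2)
      + (1 - t ^ 2) * (1 - s) * (s + t ^ 2) / t ^ 2
          * (8 * G s / (Real.pi ^ 2 * (1 - s)))
      ≤ 8 / Real.pi ^ 2 := by
  have hs1 : s < 1 := hst.trans ht
  have hg_lower := hG s ▸ one_add_div_three_le_tsum_pow_div_two_mul_add_one hs.le hs1
  have hg_upper : (1 - s) * G s ≤ 1 :=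
    (le_div_iff₀' (by linarith)).1 (one_div (1 - s) ▸ hG s ▸
      tsum_pow_div_two_mul_add_one_le_inv hs.le hs1)
  have hP' : (1 - t ^ 2) * (1 - s) * (s + t ^ 2) / t ^ 2 * (8 * G s / (π ^ 2 * (1 - s)))
      = (1 - t ^ 2) * (s + t ^ 2) / t ^ 2 * (8 / π ^ 2 * G s) := by
    field_simp [(by linarith : 1 - s ≠ 0)]
  rw [hP']
  exact F_le_of_sq_one_sub_mul_le (by positivity) hs.le (by linarith)
    (pow_pos (hs.trans hst) 2) (sq_one_sub_mul_le hs.le hg_lower hg_upper)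
end

section
/- Let f be analytic on the unit disk 𝔻 = {z ∈ ℂ : |z| < 1} with f(0) = 0, f'(0) = 1 and f'(z) ≠ 0 for all z ∈ 𝔻. Suppose f is convex, i.e. Re(1 + z f''(z)/f'(z)) > 0 for all z ∈ 𝔻. Then the hyperbolic sup-norm of the Schwarzian derivative satisfies ‖S_f‖ = sup_{z∈𝔻} (1−|z|²)² |S_f(z)| ≤ 2. -/
/-!
With `p = f'' / f'` one has `S_f = p' - p² / 2`, and convexity says `Re (1 + z p) > 0`.
Since `w ↦ w / (2 + w)` maps the half-plane `Re (1 + w) > 0` into the unit disc, the function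
`z h(z)` with `h = p / (2 + z p)` maps the disc into itself and vanishes at `0`, so `|h| ≤ 1`
by the Schwarz lemma. Now `S_f = h' (2 + z p)² / 2` and `(1 - z h)(2 + z p) = 2`, so it
suffices that `(1 - |z|²)² |h'(z)| ≤ |1 - z h(z)|²`. This follows from the Schwarz–Pick
inequality `(1 - |z|²) |h'(z)| ≤ 1 - |h(z)|²` together with
`(1 - |z|²)(1 - |h|²) ≤ (1 - |z| |h|)² ≤ |1 - z h|²`.
-/

open Metric Set Complex ComplexConjugate Filter Topology

noncomputable def mobius (c w : ℂ) : ℂ := (w - c) / (1 - conj c * w)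

theorem normSq_one_sub_conj_mul_sub_normSq_sub (c w : ℂ) :
    normSq (1 - conj c * w) - normSq (w - c) = (1 - normSq c) * (1 - normSq w) := by
  simp only [normSq_apply, sub_re, sub_im, one_re, one_im, mul_re, mul_im, conj_re, conj_im]
  ring

theorem one_sub_conj_mul_ne_zero {c w : ℂ} (hc : ‖c‖ < 1) (hw : ‖w‖ ≤ 1) :
    1 - conj c * w ≠ 0 := by
  refine sub_ne_zero.2 fun h ↦ ?_
  have : ‖conj c * w‖ < 1 := by
    rw [norm_mul, norm_conj]
    nlinarith [norm_nonneg c, norm_nonneg w]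
  simp [← h] at this

theorem norm_mobius_lt_one {c w : ℂ} (hc : ‖c‖ < 1) (hw : ‖w‖ < 1) : ‖mobius c w‖ < 1 := by
  have hden := one_sub_conj_mul_ne_zero hc hw.le
  rw [mobius, norm_div, div_lt_one (norm_pos_iff.2 hden), ← sq_lt_sq₀ (norm_nonneg _)
    (norm_nonneg _), Complex.sq_norm, Complex.sq_norm, ← sub_pos,
    normSq_one_sub_conj_mul_sub_normSq_sub, ← Complex.sq_norm, ← Complex.sq_norm]
  have := norm_nonneg c
  have := norm_nonneg w
  exact mul_pos (by nlinarith) (by nlinarith)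

theorem mapsTo_mobius_ball {c : ℂ} (hc : ‖c‖ < 1) :
    MapsTo (mobius c) (ball 0 1) (ball 0 1) :=
  fun _ hw ↦ mem_ball_zero_iff.2 (norm_mobius_lt_one hc (mem_ball_zero_iff.1 hw))

@[simp] theorem mobius_self (c : ℂ) : mobius c c = 0 := by simp [mobius]

@[simp] theorem mobius_neg_zero (c : ℂ) : mobius (-c) 0 = c := by simp [mobius]

theorem hasDerivAt_mobius {c w : ℂ} (hden : 1 - conj c * w ≠ 0) :
    HasDerivAt (mobius c) ((1 - ‖c‖ ^ 2 : ℂ) / (1 - conj c * w) ^ 2) w := by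
  refine (((hasDerivAt_id w).sub_const c).div
    (((hasDerivAt_id w).const_mul (conj c)).const_sub 1) hden).congr_deriv ?_
  simp only [id, ← conj_mul']
  ring

theorem differentiableOn_mobius {c : ℂ} (hc : ‖c‖ < 1) :
    DifferentiableOn ℂ (mobius c) (ball 0 1) :=
  fun _ hw ↦ (hasDerivAt_mobius (one_sub_conj_mul_ne_zero hc
    (mem_ball_zero_iff.1 hw).le)).differentiableAt.differentiableWithinAt

theorem norm_deriv_mul_one_sub_sq_le_of_mapsTo_ball {h : ℂ → ℂ}
    (hd : DifferentiableOn ℂ h (ball 0 1)) (hmaps : MapsTo h (ball 0 1) (ball 0 1))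
    {z : ℂ} (hz : z ∈ ball (0 : ℂ) 1) :
    ‖deriv h z‖ * (1 - ‖z‖ ^ 2) ≤ 1 - ‖h z‖ ^ 2 := by
  have hz' : ‖-z‖ < 1 := by simpa using hz
  have hhz : ‖h z‖ < 1 := by simpa using hmaps hz
  have hz_sq : 0 < 1 - ‖z‖ ^ 2 := by nlinarith [norm_nonneg z, mem_ball_zero_iff.1 hz]
  have hhz_sq : 0 < 1 - ‖h z‖ ^ 2 := by nlinarith [norm_nonneg (h z)]
  set F : ℂ → ℂ := mobius (h z) ∘ h ∘ mobius (-z)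
  have hF_diff : DifferentiableOn ℂ F (ball 0 1) :=
    (differentiableOn_mobius hhz).comp (hd.comp (differentiableOn_mobius hz')
      (mapsTo_mobius_ball hz')) (hmaps.comp (mapsTo_mobius_ball hz'))
  have hF_maps : MapsTo F (ball 0 1) (closedBall (F 0) 1) := by
    simpa [F] using ((mapsTo_mobius_ball hhz).comp
      (hmaps.comp (mapsTo_mobius_ball hz'))).mono_right ball_subset_closedBall
  have hF_deriv : HasDerivAt F
      (1 / (1 - ‖h z‖ ^ 2 : ℂ) * (deriv h z * (1 - ‖z‖ ^ 2 : ℂ))) 0 := by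
    have hin : HasDerivAt (mobius (-z)) (1 - ‖z‖ ^ 2 : ℂ) 0 := by
      simpa using hasDerivAt_mobius (c := -z) (w := 0) (by simp)
    have hmid : HasDerivAt h (deriv h z) z :=
      (hd.differentiableAt (isOpen_ball.mem_nhds hz)).hasDerivAt
    have hout : HasDerivAt (mobius (h z)) (1 / (1 - ‖h z‖ ^ 2 : ℂ)) (h z) := by
      have hne : (1 - ‖h z‖ ^ 2 : ℂ) ≠ 0 := mod_cast hhz_sq.ne'
      convert hasDerivAt_mobius (one_sub_conj_mul_ne_zero hhz hhz.le) using 1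
      rw [conj_mul']
      field_simp
    exact hout.comp_of_eq 0 (hmid.comp_of_eq 0 hin (mobius_neg_zero z).symm) (by simp)
  have hschwarz := Complex.norm_deriv_le_one_of_mapsTo_ball hF_diff hF_maps one_pos
  rw [hF_deriv.deriv, norm_mul, norm_mul, ← ofReal_pow, ← ofReal_pow, ← ofReal_one,
    ← ofReal_sub, ← ofReal_sub, ← ofReal_div, norm_real, norm_real] at hschwarz
  rwa [one_div, norm_inv, Real.norm_of_nonneg hhz_sq.le, Real.norm_of_nonneg hz_sq.le,
    inv_mul_le_iff₀ hhz_sq, mul_one] at hschwarz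

theorem norm_deriv_mul_one_sub_sq_le_of_mapsTo_closedBall {h : ℂ → ℂ}
    (hd : DifferentiableOn ℂ h (ball 0 1)) (hmaps : MapsTo h (ball 0 1) (closedBall 0 1))
    {z : ℂ} (hz : z ∈ ball (0 : ℂ) 1) :
    ‖deriv h z‖ * (1 - ‖z‖ ^ 2) ≤ 1 - ‖h z‖ ^ 2 := by
  set X := ‖deriv h z‖ * (1 - ‖z‖ ^ 2)
  have hscaled : ∀ t ∈ Ioo (0 : ℝ) 1, t * X + t ^ 2 * ‖h z‖ ^ 2 ≤ 1 := by
    rintro t ⟨ht0, ht1⟩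
    have hmaps_t : MapsTo (fun w ↦ (t : ℂ) * h w) (ball 0 1) (ball 0 1) := fun w hw ↦ by
      have := mem_closedBall_zero_iff.1 (hmaps hw)
      rw [mem_ball_zero_iff, norm_mul, norm_real, Real.norm_of_nonneg ht0.le]
      nlinarith [norm_nonneg (h w)]
    have := norm_deriv_mul_one_sub_sq_le_of_mapsTo_ball (hd.const_mul (t : ℂ)) hmaps_t hz
    rw [deriv_const_mul _ (hd.differentiableAt (isOpen_ball.mem_nhds hz)), norm_mul, norm_mul,
      norm_real, Real.norm_of_nonneg ht0.le, mul_pow] at this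
    linarith
  have hlim : Tendsto (fun t : ℝ ↦ t * X + t ^ 2 * ‖h z‖ ^ 2) (𝓝[<] 1)
      (𝓝 (X + ‖h z‖ ^ 2)) := by
    have : Continuous fun t : ℝ ↦ t * X + t ^ 2 * ‖h z‖ ^ 2 := by fun_prop
    simpa using (this.tendsto 1).mono_left nhdsWithin_le_nhds
  have := le_of_tendsto hlim (eventually_of_mem (Ioo_mem_nhdsLT zero_lt_one) hscaled)
  linarith

theorem sq_one_sub_sq_mul_norm_deriv_le_sq_norm_one_sub_mul {h : ℂ → ℂ}
    (hd : DifferentiableOn ℂ h (ball 0 1)) (hmaps : MapsTo h (ball 0 1) (closedBall 0 1))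
    {z : ℂ} (hz : z ∈ ball (0 : ℂ) 1) :
    (1 - ‖z‖ ^ 2) ^ 2 * ‖deriv h z‖ ≤ ‖1 - z * h z‖ ^ 2 := by
  have hz1 : ‖z‖ < 1 := mem_ball_zero_iff.1 hz
  have hhz1 : ‖h z‖ ≤ 1 := mem_closedBall_zero_iff.1 (hmaps hz)
  have hz_sq : 0 ≤ 1 - ‖z‖ ^ 2 := by nlinarith [norm_nonneg z]
  have hprod : 0 ≤ 1 - ‖z‖ * ‖h z‖ := by nlinarith [norm_nonneg z, norm_nonneg (h z)]
  calc (1 - ‖z‖ ^ 2) ^ 2 * ‖deriv h z‖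
      = (1 - ‖z‖ ^ 2) * (‖deriv h z‖ * (1 - ‖z‖ ^ 2)) := by ring
    _ ≤ (1 - ‖z‖ ^ 2) * (1 - ‖h z‖ ^ 2) := by
      gcongr; exact norm_deriv_mul_one_sub_sq_le_of_mapsTo_closedBall hd hmaps hz
    _ ≤ (1 - ‖z‖ * ‖h z‖) ^ 2 := by nlinarith [sq_nonneg (‖z‖ - ‖h z‖)]
    _ ≤ ‖1 - z * h z‖ ^ 2 := by
      gcongr
      simpa using norm_sub_norm_le 1 (z * h z)

theorem norm_le_one_of_mapsTo_ball_mul {h : ℂ → ℂ} (hd : DifferentiableOn ℂ h (ball 0 1))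
    (hmaps : MapsTo (fun w ↦ w * h w) (ball 0 1) (ball 0 1)) :
    MapsTo h (ball 0 1) (closedBall 0 1) := by
  intro z hz
  have hg : DifferentiableOn ℂ (fun w ↦ w * h w) (ball 0 1) := differentiableOn_id.mul hd
  have hschwarz := Complex.norm_dslope_le_div_of_mapsTo_ball hg
    (by simpa using hmaps.mono_right ball_subset_closedBall) hz
  suffices dslope (fun w ↦ w * h w) 0 z = h z by simpa [this] using hschwarz
  rcases eq_or_ne z 0 with rfl | hz0
  · rw [dslope_same]
    exact ((hasDerivAt_id' 0).mul
      (hd.differentiableAt (isOpen_ball.mem_nhds hz)).hasDerivAt).deriv.trans (by simp)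
  · simpa using dslope_sub_smul_of_ne h hz0

theorem norm_div_two_add_lt_one {w : ℂ} (hw : 0 < (1 + w).re) : ‖w / (2 + w)‖ < 1 := by
  have hne : 2 + w ≠ 0 := fun h ↦ by simp [show w = -2 by linear_combination h] at hw
  rw [norm_div, div_lt_one (norm_pos_iff.2 hne), ← sq_lt_sq₀ (norm_nonneg _) (norm_nonneg _),
    Complex.sq_norm, Complex.sq_norm]
  simp only [normSq_apply, add_re, add_im, one_re] at hw ⊢
  norm_num
  nlinarith

theorem sq_one_sub_sq_mul_norm_deriv_sub_sq_div_two_le_two {p : ℂ → ℂ}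
    (hp : DifferentiableOn ℂ p (ball 0 1)) (hre : ∀ z ∈ ball (0 : ℂ) 1, 0 < (1 + z * p z).re)
    {z : ℂ} (hz : z ∈ ball (0 : ℂ) 1) :
    (1 - ‖z‖ ^ 2) ^ 2 * ‖deriv p z - p z ^ 2 / 2‖ ≤ 2 := by
  have hD : ∀ w ∈ ball (0 : ℂ) 1, 2 + w * p w ≠ 0 := fun w hw h0 ↦ by
    have := hre w hw
    simp [show w * p w = -2 by linear_combination h0] at this
  set h : ℂ → ℂ := fun w ↦ p w / (2 + w * p w)
  have hd : DifferentiableOn ℂ h (ball 0 1) :=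
    hp.div ((differentiableOn_id.mul hp).const_add 2) hD
  have hmaps : MapsTo h (ball 0 1) (closedBall 0 1) := by
    refine norm_le_one_of_mapsTo_ball_mul hd fun w hw ↦ ?_
    simpa [h, mul_div_assoc'] using norm_div_two_add_lt_one (hre w hw)
  have hpz : HasDerivAt p (deriv p z) z :=
    (hp.differentiableAt (isOpen_ball.mem_nhds hz)).hasDerivAt
  have hderiv : deriv h z = (2 * deriv p z - p z ^ 2) / (2 + z * p z) ^ 2 := by
    have : HasDerivAt h ((deriv p z * (2 + z * p z) - p z * (1 * p z + z * deriv p z))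
        / (2 + z * p z) ^ 2) z :=
      hpz.div (((hasDerivAt_id' z).mul hpz).const_add 2) (hD z hz)
    rw [this.deriv]
    ring
  have hkey : (1 - z * h z) * (2 + z * p z) = 2 := by
    simp only [h]
    field_simp [hD z hz]
    ring
  have hschwarzian : deriv p z - p z ^ 2 / 2 = deriv h z * (2 + z * p z) ^ 2 / 2 := by
    rw [hderiv, div_mul_cancel₀ _ (pow_ne_zero 2 (hD z hz))]
    ring
  calc (1 - ‖z‖ ^ 2) ^ 2 * ‖deriv p z - p z ^ 2 / 2‖
      = (1 - ‖z‖ ^ 2) ^ 2 * ‖deriv h z‖ * ‖2 + z * p z‖ ^ 2 / 2 := by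
        rw [hschwarzian, norm_div, norm_mul, norm_pow]
        norm_num
        ring
    _ ≤ ‖1 - z * h z‖ ^ 2 * ‖2 + z * p z‖ ^ 2 / 2 := by
        gcongr
        exact sq_one_sub_sq_mul_norm_deriv_le_sq_norm_one_sub_mul hd hmaps hz
    _ = 2 := by
        rw [← mul_pow, ← norm_mul, hkey]
        norm_num

theorem schwarzian_norm_le_of_convex_general (f : ℂ → ℂ)
    (hf : DifferentiableOn ℂ f (ball (0:ℂ) 1))
    (hf' : ∀ z ∈ ball (0:ℂ) 1, deriv f z ≠ 0)
    (hconv : ∀ z ∈ ball (0:ℂ) 1, 0 < (1 + z * deriv (deriv f) z / deriv f z).re) :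
    ∀ z ∈ ball (0:ℂ) 1,
      (1 - ‖z‖ ^ 2) ^ 2 *
        ‖deriv (deriv (deriv f)) z / deriv f z
          - (3 / 2) * (deriv (deriv f) z / deriv f z) ^ 2‖ ≤ 2 := by
  intro z hz
  have hf₁ : AnalyticOnNhd ℂ (deriv f) (ball 0 1) := (hf.analyticOnNhd isOpen_ball).deriv
  set p : ℂ → ℂ := fun w ↦ deriv (deriv f) w / deriv f w
  have hp : DifferentiableOn ℂ p (ball 0 1) :=
    hf₁.deriv.differentiableOn.div hf₁.differentiableOn hf'
  have hderiv : deriv p z = deriv (deriv (deriv f)) z / deriv f z - p z ^ 2 := by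
    have : HasDerivAt p ((deriv (deriv (deriv f)) z * deriv f z
        - deriv (deriv f) z * deriv (deriv f) z) / deriv f z ^ 2) z :=
      (hf₁.deriv z hz).differentiableAt.hasDerivAt.div
        (hf₁ z hz).differentiableAt.hasDerivAt (hf' z hz)
    rw [this.deriv]
    simp only [p]
    field_simp [hf' z hz]
  convert sq_one_sub_sq_mul_norm_deriv_sub_sq_div_two_le_two hp
    (fun w hw ↦ by simpa [p, mul_div_assoc] using hconv w hw) hz using 3
  rw [hderiv]
  ring

/-- Schwarzian norm estimate for convex functions: if `f` is analytic on the unit disk,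
normalized, with nonvanishing derivative, and `Re(1 + z f''(z)/f'(z)) > 0` on the disk,
then `(1-|z|²)² |S_f(z)| ≤ 2` for all `z` in the disk. -/
theorem schwarzian_norm_le_of_convex (f : ℂ → ℂ)
    (hf : DifferentiableOn ℂ f (ball (0:ℂ) 1))
    (hf0 : f 0 = 0) (hf1 : deriv f 0 = 1)
    (hf' : ∀ z ∈ ball (0:ℂ) 1, deriv f z ≠ 0)
    (hconv : ∀ z ∈ ball (0:ℂ) 1, 0 < (1 + z * deriv (deriv f) z / deriv f z).re) :
    ∀ z ∈ ball (0:ℂ) 1,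
      (1 - ‖z‖ ^ 2) ^ 2 *
        ‖deriv (deriv (deriv f)) z / deriv f z
          - (3 / 2) * (deriv (deriv f) z / deriv f z) ^ 2‖ ≤ 2 :=
  schwarzian_norm_le_of_convex_general f hf hf' hconv
end
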